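/- arXiv:2410.23664 — 12 statements merged into one kernel-verified Lean document; each statement's English description precedes it below -/
import Mathlib

section
/- (Prime Filter Lemma) Let L be a distributive meet semi-lattice with top. If F is a filter of L and I is an ideal of L with F ∩ I = ∅, then there exists a prime filter P of L such that F ⊆ P and P ∩ I = ∅. -/
/-- A filter of a meet semi-lattice: a nonempty upper set closed under meets. -/
def IsSLFilter {L : Type*} [SemilatticeInf L] (F : Set L) : Prop :=
  F.Nonempty ∧ (∀ a b : L, a ∈ F → a ≤ b → b ∈ F) ∧
    (∀ a b : L, a ∈ F → b ∈ F → a ⊓ b ∈ F)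

/-- A prime (meet-prime) filter of a meet semi-lattice. -/
def IsSLPrimeFilter {L : Type*} [SemilatticeInf L] (F : Set L) : Prop :=
  IsSLFilter F ∧ F ≠ Set.univ ∧
    ∀ F₁ F₂ : Set L, IsSLFilter F₁ → IsSLFilter F₂ → F₁ ∩ F₂ ⊆ F → F₁ ⊆ F ∨ F₂ ⊆ F

/-- An ideal of a meet semi-lattice: a nonempty lower set in which any two
elements have a common upper bound lying in the ideal. -/
def IsSLIdeal {L : Type*} [SemilatticeInf L] (I : Set L) : Prop :=
  I.Nonempty ∧ (∀ a b : L, a ∈ I → b ≤ a → b ∈ I) ∧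
    (∀ a b : L, a ∈ I → b ∈ I → ∃ c ∈ I, a ≤ c ∧ b ≤ c)

/-- A meet semi-lattice is distributive. -/
def IsDistribSL (L : Type*) [SemilatticeInf L] : Prop :=
  ∀ a b₁ b₂ : L, b₁ ⊓ b₂ ≤ a → ∃ c₁ c₂ : L, b₁ ≤ c₁ ∧ b₂ ≤ c₂ ∧ a = c₁ ⊓ c₂

/-- A Frink ideal of a meet semi-lattice. -/
def IsFrinkIdeal {L : Type*} [SemilatticeInf L] (I : Set L) : Prop :=
  I.Nonempty ∧ ∀ A : Finset L, A.Nonempty → ↑A ⊆ I →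
    ∀ c : L, (⋂ a ∈ A, Set.Ici a) ⊆ Set.Ici c → c ∈ I

/-- An optimal filter: a filter whose complement is a Frink ideal. -/
def IsOptimalFilter {L : Type*} [SemilatticeInf L] (F : Set L) : Prop :=
  IsSLFilter F ∧ IsFrinkIdeal Fᶜ

/-- σ(a): the set of prime filters containing `a`. -/
def sigmaSet {L : Type*} [SemilatticeInf L] (a : L) : Set (Set L) :=
  {P | IsSLPrimeFilter P ∧ a ∈ P}

/-- φ(a): the set of optimal filters containing `a`. -/
def phiSet {L : Type*} [SemilatticeInf L] (a : L) : Set (Set L) :=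
  {F | IsOptimalFilter F ∧ a ∈ F}

/-- Prime filter lemma for distributive meet semi-lattices with top. -/
theorem prime_filter_lemma {L : Type*} [SemilatticeInf L] [OrderTop L]
    (hd : IsDistribSL L) (F I : Set L) (hF : IsSLFilter F) (hI : IsSLIdeal I)
    (hdisj : F ∩ I = ∅) :
    ∃ P : Set L, IsSLPrimeFilter P ∧ F ⊆ P ∧ P ∩ I = ∅ := by
  classical
  obtain ⟨hFne, hFup, hFinf⟩ := hF
  obtain ⟨hIne, hIdown, hIub⟩ := hI
  set S : Set (Set L) := {G | IsSLFilter G ∧ F ⊆ G ∧ G ∩ I = ∅} with hSdef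
  have hFS : F ∈ S := ⟨⟨hFne, hFup, hFinf⟩, subset_rfl, hdisj⟩
  have hzorn : ∀ c ⊆ S, IsChain (· ⊆ ·) c → c.Nonempty →
      ∃ ub ∈ S, ∀ s ∈ c, s ⊆ ub := by
    intro c hcS hchain ⟨c₀, hc₀⟩
    refine ⟨⋃₀ c, ⟨⟨?_, ?_, ?_⟩, ?_, ?_⟩, fun s hs => Set.subset_sUnion_of_mem hs⟩
    · obtain ⟨a, ha⟩ := (hcS hc₀).1.1
      exact ⟨a, c₀, hc₀, ha⟩
    · rintro a b ⟨G, hG, haG⟩ hab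
      exact ⟨G, hG, (hcS hG).1.2.1 a b haG hab⟩
    · rintro a b ⟨G₁, hG₁, ha⟩ ⟨G₂, hG₂, hb⟩
      rcases hchain.total hG₁ hG₂ with h | h
      · exact ⟨G₂, hG₂, (hcS hG₂).1.2.2 a b (h ha) hb⟩
      · exact ⟨G₁, hG₁, (hcS hG₁).1.2.2 a b ha (h hb)⟩
    · exact (hcS hc₀).2.1.trans (Set.subset_sUnion_of_mem hc₀)
    · rw [Set.eq_empty_iff_forall_notMem]
      rintro x ⟨⟨G, hG, hxG⟩, hxI⟩
      have := (hcS hG).2.2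
      rw [Set.eq_empty_iff_forall_notMem] at this
      exact this x ⟨hxG, hxI⟩
  obtain ⟨P, hFP, hPmax⟩ := zorn_subset_nonempty S hzorn F hFS
  obtain ⟨hPfil, hFsubP, hPI⟩ := hPmax.1
  obtain ⟨hPne, hPup, hPinf⟩ := hPfil
  have hPdisj : ∀ x ∈ P, x ∉ I := by
    intro x hx hxI
    rw [Set.eq_empty_iff_forall_notMem] at hPI
    exact hPI x ⟨hx, hxI⟩
  have htopP : (⊤ : L) ∈ P := by
    obtain ⟨a, ha⟩ := hPne
    exact hPup a ⊤ ha le_top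
  -- key step: extending P by an element outside P hits I
  have hext : ∀ x : L, x ∉ P → ∃ p ∈ P, ∃ i ∈ I, p ⊓ x ≤ i := by
    intro x hx
    set G : Set L := {b | ∃ p ∈ P, p ⊓ x ≤ b} with hGdef
    have hGfil : IsSLFilter G := by
      refine ⟨⟨x, ⊤, htopP, inf_le_right⟩, ?_, ?_⟩
      · rintro a b ⟨p, hp, hpx⟩ hab
        exact ⟨p, hp, hpx.trans hab⟩
      · rintro a b ⟨p, hp, hpx⟩ ⟨q, hq, hqx⟩
        refine ⟨p ⊓ q, hPinf p q hp hq, le_inf ?_ ?_⟩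
        · exact le_trans (inf_le_inf_right x inf_le_left) hpx
        · exact le_trans (inf_le_inf_right x inf_le_right) hqx
    have hPG : P ⊆ G := fun b hb => ⟨b, hb, inf_le_left⟩
    have hxG : x ∈ G := ⟨⊤, htopP, inf_le_right⟩
    have hGne : ¬ (G ∩ I = ∅) := by
      intro hGI
      have : G = P := le_antisymm (hPmax.2 ⟨hGfil, hFsubP.trans hPG, hGI⟩ hPG) hPG
      exact hx (this ▸ hxG)
    rw [Set.eq_empty_iff_forall_notMem] at hGne
    push_neg at hGne
    obtain ⟨b, ⟨p, hp, hpb⟩, hbI⟩ := hGne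
    exact ⟨p, hp, b, hbI, hpb⟩
  refine ⟨P, ⟨⟨hPne, hPup, hPinf⟩, ?_, ?_⟩, hFsubP, hPI⟩
  · -- proper
    intro h
    obtain ⟨i, hi⟩ := hIne
    exact hPdisj i (h ▸ Set.mem_univ i) hi
  · -- prime
    intro F₁ F₂ hF₁ hF₂ hsub
    by_contra hcon
    push_neg at hcon
    obtain ⟨⟨x₁, hx₁F, hx₁P⟩, ⟨x₂, hx₂F, hx₂P⟩⟩ :
        (∃ x ∈ F₁, x ∉ P) ∧ (∃ x ∈ F₂, x ∉ P) := by
      constructor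
      · rcases Set.not_subset.mp hcon.1 with ⟨x, hx, hx'⟩; exact ⟨x, hx, hx'⟩
      · rcases Set.not_subset.mp hcon.2 with ⟨x, hx, hx'⟩; exact ⟨x, hx, hx'⟩
    obtain ⟨p₁, hp₁, i₁, hi₁, h₁⟩ := hext x₁ hx₁P
    obtain ⟨p₂, hp₂, i₂, hi₂, h₂⟩ := hext x₂ hx₂P
    obtain ⟨i, hiI, hi₁i, hi₂i⟩ := hIub i₁ i₂ hi₁ hi₂
    set p := p₁ ⊓ p₂ with hpdef
    have hpP : p ∈ P := hPinf p₁ p₂ hp₁ hp₂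
    have hpx₁ : p ⊓ x₁ ≤ i :=
      le_trans (inf_le_inf_right x₁ inf_le_left) (h₁.trans hi₁i)
    have hpx₂ : p ⊓ x₂ ≤ i :=
      le_trans (inf_le_inf_right x₂ inf_le_right) (h₂.trans hi₂i)
    obtain ⟨c₁, d₁, hpc₁, hxd₁, hieq⟩ := hd i p x₁ hpx₁
    have hpx₂' : p ⊓ x₂ ≤ d₁ := hpx₂.trans (hieq.le.trans inf_le_right)
    obtain ⟨c₂, d₂, hpc₂, hxd₂, hd₁eq⟩ := hd d₁ p x₂ hpx₂'
    have hd₁d₂ : d₁ ≤ d₂ := hd₁eq.le.trans inf_le_right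
    have hd₂F₁ : d₂ ∈ F₁ := hF₁.2.1 x₁ d₂ hx₁F (hxd₁.trans hd₁d₂)
    have hd₂F₂ : d₂ ∈ F₂ := hF₂.2.1 x₂ d₂ hx₂F hxd₂
    have hd₂P : d₂ ∈ P := hsub ⟨hd₂F₁, hd₂F₂⟩
    have hc₁P : c₁ ∈ P := hPup p c₁ hpP hpc₁
    have hc₂P : c₂ ∈ P := hPup p c₂ hpP hpc₂
    have hiP : i ∈ P := by
      have : c₁ ⊓ (c₂ ⊓ d₂) ∈ P := hPinf _ _ hc₁P (hPinf _ _ hc₂P hd₂P)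
      rwa [← hd₁eq, ← hieq] at this
    exact hPdisj i hiP hiI
end

section
/- Every proper filter F of a distributive meet semi-lattice with top is the intersection of all prime filters containing it: F = ⋂ {P : P is a prime filter of L and F ⊆ P}. -/
lemma slfilter_ext_mem {L : Type*} [SemilatticeInf L] {M : Set L} {a x : L}
    (hM : IsSLFilter M) (ha : a ∉ M)
    (hmax : ∀ G : Set L, IsSLFilter G → a ∉ G → M ⊆ G → G ⊆ M)
    (hx : x ∉ M) : ∃ m ∈ M, m ⊓ x ≤ a := by
  obtain ⟨m0, hm0⟩ := hM.1
  set G : Set L := {y | ∃ m ∈ M, m ⊓ x ≤ y} with hGdef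
  have hGf : IsSLFilter G := by
    refine ⟨⟨x, m0, hm0, inf_le_right⟩, ?_, ?_⟩
    · rintro y z ⟨m, hm, hle⟩ hyz
      exact ⟨m, hm, hle.trans hyz⟩
    · rintro y z ⟨m1, hm1, h1⟩ ⟨m2, hm2, h2⟩
      refine ⟨m1 ⊓ m2, hM.2.2 _ _ hm1 hm2, le_inf ?_ ?_⟩
      · exact le_trans (inf_le_inf_right x inf_le_left) h1
      · exact le_trans (inf_le_inf_right x inf_le_right) h2
  have hMG : M ⊆ G := fun m hm => ⟨m, hm, inf_le_left⟩
  by_cases haG : a ∈ G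
  · exact haG
  · have hxG : x ∈ G := ⟨m0, hm0, inf_le_right⟩
    exact absurd (hmax G hGf haG hMG hxG) hx

lemma exists_prime_filter {L : Type*} [SemilatticeInf L]
    (hd : IsDistribSL L) (F : Set L) (hF : IsSLFilter F) {a : L} (ha : a ∉ F) :
    ∃ P : Set L, IsSLPrimeFilter P ∧ F ⊆ P ∧ a ∉ P := by
  obtain ⟨M, hFM, hMmax⟩ := zorn_subset_nonempty {G : Set L | IsSLFilter G ∧ a ∉ G}
    (fun c hc hchain hcne => by
      refine ⟨⋃₀ c, ⟨⟨?_, ?_, ?_⟩, ?_⟩, fun s hs => Set.subset_sUnion_of_mem hs⟩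
      · obtain ⟨s, hs⟩ := hcne
        obtain ⟨y, hy⟩ := (hc hs).1.1
        exact ⟨y, s, hs, hy⟩
      · rintro x y ⟨s, hs, hxs⟩ hxy
        exact ⟨s, hs, (hc hs).1.2.1 _ _ hxs hxy⟩
      · rintro x y ⟨s, hs, hxs⟩ ⟨t, ht, hyt⟩
        rcases hchain.total hs ht with h | h
        · exact ⟨t, ht, (hc ht).1.2.2 _ _ (h hxs) hyt⟩
        · exact ⟨s, hs, (hc hs).1.2.2 _ _ hxs (h hyt)⟩
      · rintro ⟨s, hs, has⟩
        exact (hc hs).2 has)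
    F ⟨hF, ha⟩
  have hMf : IsSLFilter M := hMmax.1.1
  have haM : a ∉ M := hMmax.1.2
  have hmax : ∀ G : Set L, IsSLFilter G → a ∉ G → M ⊆ G → G ⊆ M :=
    fun G hGf haG hMG => hMmax.2 ⟨hGf, haG⟩ hMG
  refine ⟨M, ⟨hMf, ?_, ?_⟩, hFM, haM⟩
  · intro h; exact haM (h ▸ Set.mem_univ a)
  · intro F₁ F₂ hF₁ hF₂ hsub
    by_contra hcon
    push_neg at hcon
    obtain ⟨x₁, hx₁, hx₁M⟩ := Set.not_subset.1 hcon.1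
    obtain ⟨x₂, hx₂, hx₂M⟩ := Set.not_subset.1 hcon.2
    obtain ⟨m₁, hm₁, h1⟩ := slfilter_ext_mem hMf haM hmax hx₁M
    obtain ⟨m₂, hm₂, h2⟩ := slfilter_ext_mem hMf haM hmax hx₂M
    set m := m₁ ⊓ m₂ with hm
    have hmM : m ∈ M := hMf.2.2 _ _ hm₁ hm₂
    have h1' : m ⊓ x₁ ≤ a := le_trans (inf_le_inf_right x₁ inf_le_left) h1
    have h2' : m ⊓ x₂ ≤ a := le_trans (inf_le_inf_right x₂ inf_le_right) h2
    obtain ⟨c, d, hmc, hx1d, had⟩ := hd a m x₁ h1'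
    have h2'' : m ⊓ x₂ ≤ d := h2'.trans (had.le.trans inf_le_right)
    obtain ⟨c', d', hmc', hx2d', hdd⟩ := hd d m x₂ h2''
    have hd'F₁ : d' ∈ F₁ := hF₁.2.1 _ _ hx₁ (hx1d.trans (hdd.le.trans inf_le_right))
    have hd'F₂ : d' ∈ F₂ := hF₂.2.1 _ _ hx₂ hx2d'
    have hd'M : d' ∈ M := hsub ⟨hd'F₁, hd'F₂⟩
    have hcM : c ∈ M := hMf.2.1 _ _ hmM hmc
    have hc'M : c' ∈ M := hMf.2.1 _ _ hmM hmc'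
    have : a ∈ M := by
      have : c ⊓ (c' ⊓ d') ∈ M := hMf.2.2 _ _ hcM (hMf.2.2 _ _ hc'M hd'M)
      rwa [← hdd, ← had] at this
    exact haM this

/-- Every proper filter of a distributive meet semi-lattice with top is the
intersection of the prime filters containing it. -/
theorem proper_filter_eq_sInter_primes {L : Type*} [SemilatticeInf L] [OrderTop L]
    (hd : IsDistribSL L) (F : Set L) (hF : IsSLFilter F) (hproper : F ≠ Set.univ) :
    F = ⋂₀ {P : Set L | IsSLPrimeFilter P ∧ F ⊆ P} := by
  apply Set.Subset.antisymm
  · exact fun x hx P hP => hP.2 hx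
  · intro a ha
    by_contra haF
    obtain ⟨P, hP, hFP, haP⟩ := exists_prime_filter hd F hF haF
    exact haP (ha P ⟨hP, hFP⟩)
end

section
/- (Stone representation) Let L be a distributive meet semi-lattice with top. Then σ(a ⊓ b) = σ(a) ∩ σ(b) for all a, b ∈ L, σ(⊤) is the set of all prime filters of L, and for all a, b ∈ L one has a ≤ b if and only if σ(a) ⊆ σ(b); in particular σ is injective. -/
lemma top_mem_slfilter {L : Type*} [SemilatticeInf L] [OrderTop L] {F : Set L}
    (hF : IsSLFilter F) : (⊤ : L) ∈ F := by
  obtain ⟨⟨x, hx⟩, hup, -⟩ := hF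
  exact hup x ⊤ hx le_top

lemma exists_prime_sep {L : Type*} [SemilatticeInf L] [OrderTop L]
    (hd : IsDistribSL L) {a b : L} (hab : ¬ a ≤ b) :
    ∃ P : Set L, IsSLPrimeFilter P ∧ a ∈ P ∧ b ∉ P := by
  set S : Set (Set L) := {F | IsSLFilter F ∧ a ∈ F ∧ b ∉ F} with hS
  have hIci : Set.Ici a ∈ S := by
    refine ⟨⟨⟨a, le_rfl⟩, fun x y hx hxy => le_trans hx hxy,
      fun x y hx hy => le_inf hx hy⟩, le_rfl, hab⟩
  obtain ⟨M, -, hMS, hmax⟩ := zorn_subset_nonempty S (fun c hcS hchain hcne => by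
    refine ⟨⋃₀ c, ⟨⟨?_, ?_, ?_⟩, ?_, ?_⟩, fun s hs => Set.subset_sUnion_of_mem hs⟩
    · obtain ⟨F, hF⟩ := hcne
      exact ⟨a, Set.mem_sUnion.2 ⟨F, hF, (hcS hF).2.1⟩⟩
    · rintro x y ⟨F, hF, hxF⟩ hxy
      exact ⟨F, hF, (hcS hF).1.2.1 x y hxF hxy⟩
    · rintro x y ⟨F, hF, hxF⟩ ⟨G, hG, hyG⟩
      rcases hchain.total hF hG with h | h
      · exact ⟨G, hG, (hcS hG).1.2.2 x y (h hxF) hyG⟩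
      · exact ⟨F, hF, (hcS hF).1.2.2 x y hxF (h hyG)⟩
    · obtain ⟨F, hF⟩ := hcne
      exact ⟨F, hF, (hcS hF).2.1⟩
    · rintro ⟨F, hF, hbF⟩
      exact (hcS hF).2.2 hbF) (Set.Ici a) hIci
  obtain ⟨hMfil, haM, hbM⟩ := hMS
  -- key: for every x ∉ M, there is f ∈ M with f ⊓ x ≤ b
  have key : ∀ x : L, x ∉ M → ∃ f ∈ M, f ⊓ x ≤ b := by
    intro x hx
    by_contra h
    push_neg at h
    have hGfil : IsSLFilter {y | ∃ f ∈ M, f ⊓ x ≤ y} := by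
      refine ⟨⟨x, show ∃ f ∈ M, f ⊓ x ≤ x from ⟨a, haM, inf_le_right⟩⟩, ?_, ?_⟩
      · rintro u v ⟨f, hf, hfu⟩ huv
        exact ⟨f, hf, le_trans hfu huv⟩
      · rintro u v ⟨f, hf, hfu⟩ ⟨g, hg, hgv⟩
        refine ⟨f ⊓ g, hMfil.2.2 f g hf hg, le_inf ?_ ?_⟩
        · exact le_trans (inf_le_inf_right x inf_le_left) hfu
        · exact le_trans (inf_le_inf_right x inf_le_right) hgv
    have hGS : {y | ∃ f ∈ M, f ⊓ x ≤ y} ∈ S := by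
      refine ⟨hGfil, show ∃ f ∈ M, f ⊓ x ≤ a from ⟨a, haM, inf_le_left⟩, ?_⟩
      rintro ⟨f, hf, hfb⟩
      exact h f hf hfb
    have hMG : M ⊆ {y | ∃ f ∈ M, f ⊓ x ≤ y} := fun m hm => ⟨m, hm, inf_le_left⟩
    have := hmax hGS hMG
    exact hx (this (show ∃ f ∈ M, f ⊓ x ≤ x from ⟨a, haM, inf_le_right⟩))
  refine ⟨M, ⟨hMfil, ?_, ?_⟩, haM, hbM⟩
  · intro hMuniv
    exact hbM (hMuniv ▸ Set.mem_univ b)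
  · intro F₁ F₂ hF₁ hF₂ hsub
    by_contra h
    push_neg at h
    obtain ⟨x₁, hx₁F, hx₁M⟩ := Set.not_subset.1 h.1
    obtain ⟨x₂, hx₂F, hx₂M⟩ := Set.not_subset.1 h.2
    obtain ⟨f₁, hf₁, hf₁x⟩ := key x₁ hx₁M
    obtain ⟨f₂, hf₂, hf₂x⟩ := key x₂ hx₂M
    set f := f₁ ⊓ f₂ with hf
    have hfM : f ∈ M := hMfil.2.2 f₁ f₂ hf₁ hf₂
    have h1 : f ⊓ x₁ ≤ b := le_trans (inf_le_inf_right x₁ inf_le_left) hf₁x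
    have h2 : f ⊓ x₂ ≤ b := le_trans (inf_le_inf_right x₂ inf_le_right) hf₂x
    obtain ⟨c₁, d₁, hfc₁, hxd₁, hbeq⟩ := hd b f x₁ h1
    have h3 : f ⊓ x₂ ≤ d₁ := le_trans h2 (hbeq ▸ inf_le_right)
    obtain ⟨c₃, d₃, hfc₃, hxd₃, hd₁eq⟩ := hd d₁ f x₂ h3
    have hd₃x₁ : x₁ ≤ d₃ := le_trans hxd₁ (hd₁eq ▸ inf_le_right)
    have hd₃M : d₃ ∈ M := hsub ⟨hF₁.2.1 x₁ d₃ hx₁F hd₃x₁, hF₂.2.1 x₂ d₃ hx₂F hxd₃⟩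
    have hc₁M : c₁ ∈ M := hMfil.2.1 f c₁ hfM hfc₁
    have hc₃M : c₃ ∈ M := hMfil.2.1 f c₃ hfM hfc₃
    have : b ∈ M := by
      have : c₁ ⊓ (c₃ ⊓ d₃) ∈ M :=
        hMfil.2.2 _ _ hc₁M (hMfil.2.2 _ _ hc₃M hd₃M)
      rwa [← hd₁eq, ← hbeq] at this
    exact hbM this

/-- Stone representation for distributive meet semi-lattices with top. -/
theorem stone_representation {L : Type*} [SemilatticeInf L] [OrderTop L]
    (hd : IsDistribSL L) :
    (∀ a b : L, sigmaSet (a ⊓ b) = sigmaSet a ∩ sigmaSet b) ∧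
    sigmaSet (⊤ : L) = {P : Set L | IsSLPrimeFilter P} ∧
    (∀ a b : L, a ≤ b ↔ sigmaSet a ⊆ sigmaSet b) ∧
    Function.Injective (sigmaSet (L := L)) := by
  constructor
  · intro a b
    ext P
    simp only [sigmaSet, Set.mem_setOf_eq, Set.mem_inter_iff]
    constructor
    · rintro ⟨hP, hab⟩
      exact ⟨⟨hP, hP.1.2.1 _ _ hab inf_le_left⟩, hP, hP.1.2.1 _ _ hab inf_le_right⟩
    · rintro ⟨⟨hP, ha⟩, -, hb⟩
      exact ⟨hP, hP.1.2.2 a b ha hb⟩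
  refine ⟨?_, ?_, ?_⟩
  · ext P
    simp only [sigmaSet, Set.mem_setOf_eq]
    exact ⟨fun h => h.1, fun h => ⟨h, top_mem_slfilter h.1⟩⟩
  · intro a b
    constructor
    · rintro hab P ⟨hP, haP⟩
      exact ⟨hP, hP.1.2.1 a b haP hab⟩
    · intro hsub
      by_contra hab
      obtain ⟨P, hP, haP, hbP⟩ := exists_prime_sep hd hab
      exact hbP (hsub ⟨hP, haP⟩).2
  · intro a b hab
    have h1 : a ≤ b := by
      by_contra h
      obtain ⟨P, hP, haP, hbP⟩ := exists_prime_sep hd h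
      have hPa : P ∈ sigmaSet a := ⟨hP, haP⟩
      rw [hab] at hPa
      exact hbP hPa.2
    have h2 : b ≤ a := by
      by_contra h
      obtain ⟨P, hP, hbP, haP⟩ := exists_prime_sep hd h
      have hPb : P ∈ sigmaSet b := ⟨hP, hbP⟩
      rw [← hab] at hPb
      exact haP hPb.2
    exact le_antisymm h1 h2
end

section
/- (Optimal Filter Lemma) Let L be a distributive meet semi-lattice with top. If F is a filter of L and I is a Frink ideal of L with F ∩ I = ∅, then there exists an optimal filter G of L such that F ⊆ G and G ∩ I = ∅. -/
/-- Frink ideals are lower sets. -/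
lemma frink_mem_of_le {L : Type*} [SemilatticeInf L] {I : Set L}
    (hI : IsFrinkIdeal I) {a b : L} (ha : a ∈ I) (hba : b ≤ a) : b ∈ I := by
  refine hI.2 {a} (Finset.singleton_nonempty a) (by simpa using ha) b ?_
  intro t ht
  simp only [Finset.coe_singleton, Set.mem_iInter, Set.mem_Ici, Finset.mem_singleton] at ht
  exact hba.trans (ht a rfl)

/-- Key splitting lemma from distributivity. -/
lemma key_split {L : Type*} [SemilatticeInf L] [OrderTop L] (hd : IsDistribSL L)
    (d : L) (f : L → L) (A : Finset L) :
    ∀ t : L, (∀ a ∈ A, d ⊓ f a ≤ t) →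
      ∃ p q : L, d ≤ p ∧ (∀ a ∈ A, f a ≤ q) ∧ t = p ⊓ q := by
  classical
  induction A using Finset.induction_on with
  | empty =>
    intro t _
    exact ⟨⊤, t, le_top, by simp, (top_inf_eq t).symm⟩
  | @insert a A ha ih =>
    intro t ht
    obtain ⟨p, q, hdp, hq, rfl⟩ := ih t (fun a' h => ht a' (Finset.mem_insert_of_mem h))
    have h1 : d ⊓ f a ≤ q := le_trans (ht a (Finset.mem_insert_self _ _)) inf_le_right
    obtain ⟨p', q', hdp', hfq', hqeq⟩ := hd q d (f a) h1
    refine ⟨p ⊓ p', q', le_inf hdp hdp', ?_, by rw [hqeq, inf_assoc]⟩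
    intro a' ha'
    rcases Finset.mem_insert.mp ha' with rfl | ha'
    · exact hfq'
    · exact le_trans (hq a' ha') (hqeq ▸ inf_le_right)

/-- Optimal filter lemma for distributive meet semi-lattices with top. -/
theorem optimal_filter_lemma {L : Type*} [SemilatticeInf L] [OrderTop L]
    (hd : IsDistribSL L) (F I : Set L) (hF : IsSLFilter F) (hI : IsFrinkIdeal I)
    (hdisj : F ∩ I = ∅) :
    ∃ G : Set L, IsOptimalFilter G ∧ F ⊆ G ∧ G ∩ I = ∅ := by
  classical
  set S : Set (Set L) := {G | IsSLFilter G ∧ F ⊆ G ∧ G ∩ I = ∅} with hSdef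
  have hFS : F ∈ S := ⟨hF, subset_rfl, hdisj⟩
  have hchain : ∀ c ⊆ S, IsChain (fun x1 x2 => x1 ⊆ x2) c → c.Nonempty →
      ∃ ub ∈ S, ∀ s ∈ c, s ⊆ ub := by
    intro c hcS hchain ⟨s₀, hs₀⟩
    refine ⟨⋃₀ c, ⟨⟨?_, ?_, ?_⟩, ?_, ?_⟩, fun s hs => Set.subset_sUnion_of_mem hs⟩
    · obtain ⟨x, hx⟩ := (hcS hs₀).1.1
      exact ⟨x, s₀, hs₀, hx⟩
    · rintro a b ⟨s, hs, has⟩ hab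
      exact ⟨s, hs, (hcS hs).1.2.1 a b has hab⟩
    · rintro a b ⟨s, hs, has⟩ ⟨s', hs', hbs'⟩
      rcases hchain.total hs hs' with h | h
      · exact ⟨s', hs', (hcS hs').1.2.2 a b (h has) hbs'⟩
      · exact ⟨s, hs, (hcS hs).1.2.2 a b has (h hbs')⟩
    · exact Set.Subset.trans (hcS hs₀).2.1 (Set.subset_sUnion_of_mem hs₀)
    · rw [Set.eq_empty_iff_forall_notMem]
      rintro x ⟨⟨s, hs, hxs⟩, hxI⟩
      have := (hcS hs).2.2
      rw [Set.eq_empty_iff_forall_notMem] at this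
      exact this x ⟨hxs, hxI⟩
  obtain ⟨G, hFG, hGmax⟩ := zorn_subset_nonempty S hchain F hFS
  obtain ⟨hGfil, hFsubG, hGI⟩ : IsSLFilter G ∧ F ⊆ G ∧ G ∩ I = ∅ := hGmax.prop
  have hGInot : ∀ x, x ∈ G → x ∉ I := by
    intro x hxG hxI
    rw [Set.eq_empty_iff_forall_notMem] at hGI
    exact hGI x ⟨hxG, hxI⟩
  -- maximality: for a ∉ G, some g ∈ G and x ∈ I with g ⊓ a ≤ x
  have hext : ∀ a : L, a ∉ G → ∃ g ∈ G, ∃ x ∈ I, g ⊓ a ≤ x := by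
    intro a haG
    by_contra hno
    push_neg at hno
    set G' : Set L := {y | ∃ g ∈ G, g ⊓ a ≤ y} with hG'def
    have hGG' : G ⊆ G' := fun g hg => ⟨g, hg, inf_le_left⟩
    have hG'S : G' ∈ S := by
      refine ⟨⟨?_, ?_, ?_⟩, Set.Subset.trans hFsubG hGG', ?_⟩
      · obtain ⟨g, hg⟩ := hGfil.1
        exact ⟨g, g, hg, inf_le_left⟩
      · rintro y z ⟨g, hg, hgy⟩ hyz
        exact ⟨g, hg, hgy.trans hyz⟩
      · rintro y z ⟨g, hg, hgy⟩ ⟨g', hg', hg'z⟩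
        refine ⟨g ⊓ g', hGfil.2.2 g g' hg hg', ?_⟩
        calc g ⊓ g' ⊓ a ≤ (g ⊓ a) ⊓ (g' ⊓ a) := by
              simp only [le_inf_iff]
              exact ⟨⟨inf_le_left.trans inf_le_left, inf_le_right⟩,
                ⟨inf_le_left.trans inf_le_right, inf_le_right⟩⟩
          _ ≤ y ⊓ z := inf_le_inf hgy hg'z
      · rw [Set.eq_empty_iff_forall_notMem]
        rintro x ⟨⟨g, hg, hgx⟩, hxI⟩
        exact hno g hg x hxI hgx
    have : G' = G := hGmax.eq_of_ge hG'S hGG' ▸ rfl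
    exact haG (this ▸ ⟨⊤, hGfil.2.1 _ ⊤ hGfil.1.choose_spec le_top, inf_le_right⟩)
  refine ⟨G, ⟨hGfil, ?_, ?_⟩, hFsubG, hGI⟩
  · obtain ⟨i, hiI⟩ := hI.1
    exact ⟨i, fun h => hGInot i h hiI⟩
  · intro A hAne hAsub c hc
    by_contra hcG
    simp only [Set.mem_compl_iff, not_not] at hcG
    -- choose g a, x a for each a ∈ A
    have hch : ∀ a ∈ A, ∃ g ∈ G, ∃ x ∈ I, g ⊓ a ≤ x := by
      intro a ha
      exact hext a (hAsub ha)
    choose! g hg x hx hgx using hch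
    -- d := (inf of g over A) ⊓ c ∈ G
    have hd0 : A.inf' hAne g ∈ G :=
      Finset.inf'_mem G (fun u hu v hv => hGfil.2.2 u v hu hv) A hAne g hg
    set d : L := A.inf' hAne g ⊓ c with hddef
    have hdG : d ∈ G := hGfil.2.2 _ _ hd0 hcG
    -- for each a ∈ A, d ⊓ a ≤ x a; apply distributivity
    have hda : ∀ a ∈ A, ∃ e fa : L, d ≤ e ∧ a ≤ fa ∧ x a = e ⊓ fa := by
      intro a ha
      refine hd (x a) d a (le_trans ?_ (hgx a ha))
      exact inf_le_inf_right a (inf_le_left.trans (Finset.inf'_le g ha))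
    choose! e f hde haf hxef using hda
    -- the finset B of elements d ⊓ f a
    have hBI : ∀ a ∈ A, d ⊓ f a ∈ I := by
      intro a ha
      refine frink_mem_of_le hI (hx a ha) ?_
      rw [hxef a ha]
      exact inf_le_inf_left _ (le_of_eq rfl) |>.trans (inf_le_inf (hde a ha) le_rfl)
    have hdcI : d ⊓ c ∈ I := by
      refine hI.2 (A.image (fun a => d ⊓ f a)) (hAne.image _) ?_ (d ⊓ c) ?_
      · intro b hb
        simp only [Finset.coe_image, Set.mem_image, Finset.mem_coe] at hb
        obtain ⟨a, ha, rfl⟩ := hb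
        exact hBI a ha
      · intro t ht
        simp only [Set.mem_iInter, Set.mem_Ici, Finset.mem_image] at ht
        have ht' : ∀ a ∈ A, d ⊓ f a ≤ t := fun a ha => ht _ ⟨a, ha, rfl⟩
        obtain ⟨p, q, hdp, hq, rfl⟩ := key_split hd d f A t ht'
        have hqc : c ≤ q := by
          refine hc ?_
          simp only [Set.mem_iInter, Set.mem_Ici]
          intro a ha
          exact le_trans (haf a ha) (hq a ha)
        exact Set.mem_Ici.mpr (inf_le_inf hdp hqc)
    exact hGInot (d ⊓ c) (hGfil.2.2 _ _ hdG hcG) hdcI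
end

section
/- Let L be a distributive meet semi-lattice with top and let F be a filter of L. Then the complement L ∖ F is a Frink ideal if and only if there exists a Frink ideal I of L with F ∩ I = ∅ such that F is maximal among the filters of L disjoint from I (i.e., every filter G of L with F ⊆ G and G ∩ I = ∅ satisfies G = F). -/
/-!
If `F` is maximal among the filters disjoint from a Frink ideal `I`, then every `a ∉ F`
yields `f ∈ F` and `d ∈ I` with `f ⊓ a ≤ d`, since the filter generated by `F` and `a`
must meet `I`. Given `a₁, …, aₙ ∉ F` with `⋂ ↑aᵢ ⊆ ↑c` and `c ∈ F`, take one `f ∈ F` that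
works for all `aᵢ`. Distributivity turns "`f ⊓ aᵢ ≤ x` for all `i`" into "`f ⊓ g ≤ x` for
some common upper bound `g` of the `aᵢ`", so every upper bound of the `dᵢ` lies above
`f ⊓ c`. Hence `f ⊓ c ∈ F ∩ I`, a contradiction.
-/

namespace IsDistribSL

variable {L : Type*} [SemilatticeInf L]

theorem exists_ge_inf_le (hd : IsDistribSL L) {f a b x : L} (ha : f ⊓ a ≤ x)
    (hb : f ⊓ b ≤ x) : ∃ g, a ≤ g ∧ b ≤ g ∧ f ⊓ g ≤ x := by
  obtain ⟨e, h, hfe, hbh, rfl⟩ := hd x f b hb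
  obtain ⟨e', g, hfe', hag, rfl⟩ := hd h f a (ha.trans inf_le_right)
  refine ⟨g, hag, hbh.trans inf_le_right, ?_⟩
  exact le_inf (inf_le_left.trans hfe) (inf_le_inf_right g hfe')

theorem exists_upperBound_inf_le (hd : IsDistribSL L) {A : Finset L} (hA : A.Nonempty)
    {f x : L} (hAx : ∀ a ∈ A, f ⊓ a ≤ x) : ∃ g, (∀ a ∈ A, a ≤ g) ∧ f ⊓ g ≤ x := by
  induction hA using Finset.Nonempty.cons_induction with
  | singleton a => exact ⟨a, by simp, hAx a (Finset.mem_singleton_self a)⟩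
  | cons a s _ _ ih =>
    simp only [Finset.mem_cons, forall_eq_or_imp] at hAx ⊢
    obtain ⟨g, hsg, hgx⟩ := ih hAx.2
    obtain ⟨g', hag', hgg', hg'x⟩ := hd.exists_ge_inf_le hAx.1 hgx
    exact ⟨g', ⟨hag', fun b hb => (hsg b hb).trans hgg'⟩, hg'x⟩

end IsDistribSL

section

variable {L : Type*} [SemilatticeInf L]

theorem IsFrinkIdeal.inf_mem_of_forall_inf_le (hd : IsDistribSL L) {I : Set L}
    (hI : IsFrinkIdeal I) {A : Finset L} (hA : A.Nonempty) {f c : L}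
    (hAI : ∀ a ∈ A, ∃ d ∈ I, f ⊓ a ≤ d) (hc : (⋂ a ∈ A, Set.Ici a) ⊆ Set.Ici c) :
    f ⊓ c ∈ I := by
  classical
  choose! d hdI hfd using hAI
  refine hI.2 (A.image d) (hA.image d) (by simpa [Set.subset_def] using hdI) _ fun x hx => ?_
  simp only [Set.mem_iInter, Set.mem_Ici, Finset.mem_image, forall_exists_index, and_imp,
    forall_apply_eq_imp_iff₂] at hx
  obtain ⟨g, hAg, hgx⟩ :=
    hd.exists_upperBound_inf_le hA fun a ha => (hfd a ha).trans (hx a ha)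
  have hcg : c ≤ g := hc (by simpa using hAg)
  exact (inf_le_inf_left f hcg).trans hgx

def filterAdjoin (F : Set L) (a : L) : Set L :=
  {x | ∃ f ∈ F, f ⊓ a ≤ x}

theorem IsSLFilter.filterAdjoin {F : Set L} (hF : IsSLFilter F) (a : L) :
    IsSLFilter (filterAdjoin F a) := by
  obtain ⟨f₀, hf₀⟩ := hF.1
  refine ⟨⟨a, f₀, hf₀, inf_le_right⟩, ?_, ?_⟩
  · rintro x y ⟨f, hf, hfx⟩ hxy
    exact ⟨f, hf, hfx.trans hxy⟩
  · rintro x y ⟨f, hf, hfx⟩ ⟨f', hf', hf'y⟩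
    refine ⟨f ⊓ f', hF.2.2 f f' hf hf', le_inf ?_ ?_⟩
    · exact (inf_le_inf_right a inf_le_left).trans hfx
    · exact (inf_le_inf_right a inf_le_right).trans hf'y

theorem mem_filterAdjoin_self {F : Set L} (hF : F.Nonempty) (a : L) : a ∈ filterAdjoin F a :=
  let ⟨f, hf⟩ := hF
  ⟨f, hf, inf_le_right⟩

theorem subset_filterAdjoin (F : Set L) (a : L) : F ⊆ filterAdjoin F a :=
  fun f hf => ⟨f, hf, inf_le_left⟩

theorem IsSLFilter.exists_inf_le_of_maximal {F I : Set L} (hF : IsSLFilter F)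
    (hmax : ∀ G : Set L, IsSLFilter G → F ⊆ G → G ∩ I = ∅ → G = F) {a : L} (ha : a ∉ F) :
    ∃ f ∈ F, ∃ d ∈ I, f ⊓ a ≤ d := by
  by_contra! h
  refine ha (hmax _ (hF.filterAdjoin a) (subset_filterAdjoin F a) ?_ ▸
    mem_filterAdjoin_self hF.1 a)
  exact Set.eq_empty_of_forall_notMem fun d ⟨⟨f, hf, hfd⟩, hd⟩ => h f hf d hd hfd

theorem IsSLFilter.exists_mem_forall_inf_le {F S : Set L} (hF : IsSLFilter F) {A : Finset L}
    (hA : A.Nonempty) (h : ∀ a ∈ A, ∃ f ∈ F, ∃ d ∈ S, f ⊓ a ≤ d) :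
    ∃ f ∈ F, ∀ a ∈ A, ∃ d ∈ S, f ⊓ a ≤ d := by
  choose! f hfF d hdS hfd using h
  refine ⟨A.inf' hA f, A.inf'_mem F (fun x hx y hy => hF.2.2 x y hx hy) hA f hfF,
    fun a ha => ⟨d a, hdS a ha, ?_⟩⟩
  exact (inf_le_inf_right a (A.inf'_le f ha)).trans (hfd a ha)

end

theorem compl_frink_iff_maximal_disjoint_general {L : Type*} [SemilatticeInf L]
    (hd : IsDistribSL L) (F : Set L) (hF : IsSLFilter F) :
    IsFrinkIdeal Fᶜ ↔
      ∃ I : Set L, IsFrinkIdeal I ∧ F ∩ I = ∅ ∧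
        ∀ G : Set L, IsSLFilter G → F ⊆ G → G ∩ I = ∅ → G = F := by
  constructor
  · intro hFc
    refine ⟨Fᶜ, hFc, Set.inter_compl_self F, fun G _ hFG hGF => hFG.antisymm' ?_⟩
    rwa [← Set.disjoint_iff_inter_eq_empty, Set.disjoint_compl_right_iff_subset] at hGF
  · rintro ⟨I, hI, hFI, hmax⟩
    have hIF : I ⊆ Fᶜ := Set.subset_compl_iff_disjoint_left.mpr
      (Set.disjoint_iff_inter_eq_empty.mpr hFI)
    refine ⟨hI.1.mono hIF, fun A hA hAF c hc hcF => ?_⟩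
    obtain ⟨f, hfF, hAI⟩ := hF.exists_mem_forall_inf_le hA fun a ha =>
      hF.exists_inf_le_of_maximal hmax (hAF ha)
    exact hIF (hI.inf_mem_of_forall_inf_le hd hA hAI hc) (hF.2.2 f c hfF hcF)

/-- A filter has Frink-ideal complement iff it is maximal among the filters
disjoint from some Frink ideal. -/
theorem compl_frink_iff_maximal_disjoint {L : Type*} [SemilatticeInf L] [OrderTop L]
    (hd : IsDistribSL L) (F : Set L) (hF : IsSLFilter F) :
    IsFrinkIdeal Fᶜ ↔
      ∃ I : Set L, IsFrinkIdeal I ∧ F ∩ I = ∅ ∧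
        ∀ G : Set L, IsSLFilter G → F ⊆ G → G ∩ I = ∅ → G = F :=
  compl_frink_iff_maximal_disjoint_general hd F hF
end

section
/- Let L be a distributive meet semi-lattice with top. Every prime filter of L is an optimal filter. Moreover, if L is a lattice, then a filter F of L is optimal if and only if F is a prime filter in the lattice sense (F is proper and a ∨ b ∈ F implies a ∈ F or b ∈ F). -/
/-!
`Fᶜ` is a Frink ideal as soon as every nonempty finite `A` whose upper bounds all lie in the
filter `F` meets `F`. For a prime filter this follows by induction on `A`, since the upper bounds
of `insert a A` are the intersection of the filters `Ici a` and `upperBounds A` (a filter thanks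
to `⊤`). In a lattice the upper bounds of `A` are the principal filter of its supremum, so the
condition reduces to `Fᶜ` being closed under `⊔`; conversely, the Frink condition for `{a, b}`
and `c = a ⊔ b` is exactly that closure.
-/

open Set

section

variable {L : Type*} [SemilatticeInf L] {F G : Set L}

lemma biInter_Ici_eq_upperBounds (A : Finset L) : ⋂ a ∈ A, Ici a = upperBounds (A : Set L) := by
  ext
  simp [mem_upperBounds]

lemma IsSLFilter.top_mem [OrderTop L] (hF : IsSLFilter F) : ⊤ ∈ F :=
  let ⟨a, ha⟩ := hF.1
  hF.2.1 a ⊤ ha le_top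

lemma IsSLFilter.inter [OrderTop L] (hF : IsSLFilter F) (hG : IsSLFilter G) :
    IsSLFilter (F ∩ G) :=
  ⟨⟨⊤, hF.top_mem, hG.top_mem⟩,
    fun a b ha hab => ⟨hF.2.1 a b ha.1 hab, hG.2.1 a b ha.2 hab⟩,
    fun a b ha hb => ⟨hF.2.2 a b ha.1 hb.1, hG.2.2 a b ha.2 hb.2⟩⟩

lemma isSLFilter_Ici (a : L) : IsSLFilter (Ici a) :=
  ⟨⟨a, le_rfl⟩, fun _ _ ha hab => ha.trans hab, fun _ _ ha hb => le_inf ha hb⟩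

lemma isSLFilter_upperBounds [OrderTop L] (A : Finset L) :
    IsSLFilter (upperBounds (A : Set L)) := by
  induction A using Finset.cons_induction with
  | empty => exact ⟨⟨⊤, by simp⟩, fun _ _ _ _ => by simp, fun _ _ _ _ => by simp⟩
  | cons a A _ ih =>
    rw [Finset.coe_cons, upperBounds_insert]
    exact (isSLFilter_Ici a).inter ih

lemma IsSLPrimeFilter.exists_mem_of_upperBounds_subset [OrderTop L] (hF : IsSLPrimeFilter F)
    {A : Finset L} (hA : A.Nonempty) (hAF : upperBounds (A : Set L) ⊆ F) :
    ∃ a ∈ A, a ∈ F := by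
  induction hA using Finset.Nonempty.cons_induction with
  | singleton a =>
    exact ⟨a, Finset.mem_singleton_self a, hAF (by simp)⟩
  | cons a A _ _ ih =>
    rw [Finset.coe_cons, upperBounds_insert] at hAF
    rcases hF.2.2 _ _ (isSLFilter_Ici a) (isSLFilter_upperBounds A) hAF with haF | hAF
    · exact ⟨a, Finset.mem_cons_self a A, haF le_rfl⟩
    · obtain ⟨b, hb, hbF⟩ := ih hAF
      exact ⟨b, Finset.mem_cons_of_mem hb, hbF⟩

lemma IsSLFilter.isOptimalFilter_of_upperBounds_subset (hF : IsSLFilter F) (hF_ne : F ≠ univ)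
    (h : ∀ A : Finset L, A.Nonempty → upperBounds (A : Set L) ⊆ F → ∃ a ∈ A, a ∈ F) :
    IsOptimalFilter F := by
  refine ⟨hF, nonempty_compl.2 hF_ne, fun A hA hAF c hc hcF => ?_⟩
  rw [biInter_Ici_eq_upperBounds] at hc
  obtain ⟨a, ha, haF⟩ := h A hA fun x hx => hF.2.1 c x hcF (hc hx)
  exact hAF ha haF

lemma IsSLPrimeFilter.isOptimalFilter [OrderTop L] (hF : IsSLPrimeFilter F) :
    IsOptimalFilter F :=
  hF.1.isOptimalFilter_of_upperBounds_subset hF.2.1 fun _ hA hAF =>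
    hF.exists_mem_of_upperBounds_subset hA hAF

lemma IsOptimalFilter.ne_univ (hF : IsOptimalFilter F) : F ≠ univ :=
  nonempty_compl.1 hF.2.1

end

section

variable {L : Type*} [Lattice L] {F : Set L}

lemma IsOptimalFilter.mem_or_mem_of_sup_mem (hF : IsOptimalFilter F) {a b : L}
    (hab : a ⊔ b ∈ F) : a ∈ F ∨ b ∈ F := by
  classical
  by_contra! h
  refine hF.2.2 {a, b} (Finset.insert_nonempty a {b}) ?_ (a ⊔ b) ?_ hab
  · simpa [insert_subset_iff] using h
  · simp

lemma IsSLFilter.isOptimalFilter_of_sup_mem (hF : IsSLFilter F) (hF_ne : F ≠ univ)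
    (hsup : ∀ a b : L, a ⊔ b ∈ F → a ∈ F ∨ b ∈ F) : IsOptimalFilter F := by
  refine hF.isOptimalFilter_of_upperBounds_subset hF_ne fun A hA hAF => ?_
  by_contra! h
  have hsup_notMem : A.sup' hA id ∈ Fᶜ :=
    Finset.sup'_mem Fᶜ (fun x hx y hy hxy => (hsup x y hxy).elim hx hy) A hA id h
  exact hsup_notMem (hAF fun _ hx => Finset.le_sup' id hx)

end

universe u

/-- Every prime filter of a distributive meet semi-lattice with top is optimal;
in a (distributive) lattice with top, optimal filters are exactly the prime
filters in the lattice sense. -/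
theorem prime_is_optimal_and_lattice_case :
    (∀ (L : Type u) [SemilatticeInf L] [OrderTop L], IsDistribSL L →
      ∀ F : Set L, IsSLPrimeFilter F → IsOptimalFilter F) ∧
    (∀ (L : Type u) [Lattice L] [OrderTop L], IsDistribSL L →
      ∀ F : Set L, IsSLFilter F →
        (IsOptimalFilter F ↔
          F ≠ Set.univ ∧ ∀ a b : L, a ⊔ b ∈ F → a ∈ F ∨ b ∈ F)) :=
  ⟨fun _ _ _ _ _ hF => hF.isOptimalFilter,
    fun _ _ _ _ _ hF => ⟨fun hopt => ⟨hopt.ne_univ, fun _ _ => hopt.mem_or_mem_of_sup_mem⟩,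
      fun ⟨hF_ne, hsup⟩ => hF.isOptimalFilter_of_sup_mem hF_ne hsup⟩⟩
end

section
/- Let L be a distributive meet semi-lattice with top. For all a, b₁, …, bₙ ∈ L (n ≥ 1): φ(a) ⊆ ⋃ᵢ₌₁ⁿ φ(bᵢ) if and only if ⋂ᵢ₌₁ⁿ ↑bᵢ ⊆ ↑a. -/
/-- Frink ideal generated by a set. -/
def genFrink {L : Type*} [SemilatticeInf L] (S : Set L) : Set L :=
  {c | ∃ A : Finset L, A.Nonempty ∧ ↑A ⊆ S ∧ (⋂ a ∈ A, Set.Ici a) ⊆ Set.Ici c}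

lemma subset_genFrink {L : Type*} [SemilatticeInf L] (S : Set L) : S ⊆ genFrink S := by
  intro x hx
  exact ⟨{x}, Finset.singleton_nonempty x, by simpa using hx, by simp⟩

lemma genFrink_isFrink {L : Type*} [SemilatticeInf L] {S : Set L} (hS : S.Nonempty) :
    IsFrinkIdeal (genFrink S) := by
  classical
  refine ⟨hS.mono (subset_genFrink S), ?_⟩
  intro A hA hAsub c hc
  choose f hf1 hf2 hf3 using fun a (ha : a ∈ A) => hAsub ha
  refine ⟨A.attach.biUnion (fun a => f a.1 a.2), ?_, ?_, ?_⟩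
  · obtain ⟨a, ha⟩ := hA
    obtain ⟨x, hx⟩ := hf1 a ha
    exact ⟨x, Finset.mem_biUnion.2 ⟨⟨a, ha⟩, Finset.mem_attach _ _, hx⟩⟩
  · intro x hx
    simp only [Finset.coe_biUnion, Set.mem_iUnion] at hx
    obtain ⟨a, -, hx⟩ := hx
    exact hf2 a.1 a.2 hx
  · intro u hu
    apply hc
    simp only [Set.mem_iInter] at hu ⊢
    intro a ha
    exact hf3 a ha (by
      simp only [Set.mem_iInter]
      intro x hx
      exact hu x (Finset.mem_biUnion.2 ⟨⟨a, ha⟩, Finset.mem_attach _ _, hx⟩))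

lemma genFrink_subset {L : Type*} [SemilatticeInf L] {J : Set L} (hJ : IsFrinkIdeal J) :
    genFrink J ⊆ J := by
  rintro c ⟨A, hA, hAsub, hc⟩
  exact hJ.2 A hA hAsub c hc

/-- separation lemma -/
lemma exists_optimal {L : Type*} [SemilatticeInf L] (hd : IsDistribSL L) {F I : Set L}
    (hF : IsSLFilter F) (hI : IsFrinkIdeal I) (hdisj : ∀ x ∈ F, x ∉ I) :
    ∃ G : Set L, IsOptimalFilter G ∧ F ⊆ G ∧ ∀ x ∈ G, x ∉ I := by
  classical
  set S : Set (Set L) := {J | IsFrinkIdeal J ∧ ∀ x ∈ F, x ∉ J} with hS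
  have hzorn : ∀ c ⊆ S, IsChain (· ⊆ ·) c → c.Nonempty → ∃ ub ∈ S, ∀ s ∈ c, s ⊆ ub := by
    intro c hcS hchain hcne
    refine ⟨⋃₀ c, ⟨⟨?_, ?_⟩, ?_⟩, fun s hs => Set.subset_sUnion_of_mem hs⟩
    · obtain ⟨t, ht⟩ := hcne
      obtain ⟨x, hx⟩ := (hcS ht).1.1
      exact ⟨x, t, ht, hx⟩
    · intro A hA hAsub e he
      rw [Set.sUnion_eq_biUnion] at hAsub
      obtain ⟨t, htc, hAt⟩ :=
        (hchain.directedOn).exists_mem_subset_of_finset_subset_biUnion hcne hAsub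
      exact Set.subset_sUnion_of_mem htc ((hcS htc).1.2 A hA hAt e he)
    · rintro x hxF ⟨t, htc, hxt⟩
      exact (hcS htc).2 x hxF hxt
  obtain ⟨M, hIM, hMmax'⟩ := zorn_subset_nonempty S hzorn I ⟨hI, hdisj⟩
  have hMS : M ∈ S := hMmax'.1
  have hMmax : ∀ J ∈ S, M ⊆ J → J ⊆ M := fun J hJ hMJ => hMmax'.2 hJ hMJ
  -- M is a lower set
  have hMfrink : IsFrinkIdeal M := hMS.1
  have hlower : ∀ x ∈ M, ∀ y : L, y ≤ x → y ∈ M := by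
    intro x hx y hy
    exact hMfrink.2 {x} (Finset.singleton_nonempty x) (by simpa using hx) y (by simpa using Set.Ici_subset_Ici.mpr hy)
  have hFM : ∀ x ∈ F, x ∉ M := hMS.2
  -- Mᶜ is meet-closed
  have hmeet : ∀ x y : L, x ∉ M → y ∉ M → x ⊓ y ∉ M := by
    intro x y hx hy hxy
    have key : ∀ z : L, z ∉ M → ∃ f ∈ F, ∃ A : Finset L, ↑A ⊆ M ∧
        (⋂ a ∈ insert z A, Set.Ici a) ⊆ Set.Ici f := by
      intro z hz
      have hJ : genFrink (insert z M) ∈ S → False := by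
        intro hJS
        exact hz (hMmax _ hJS (fun w hw => subset_genFrink _ (Set.mem_insert_of_mem _ hw))
          (subset_genFrink _ (Set.mem_insert z M)))
      have hgen : IsFrinkIdeal (genFrink (insert z M)) :=
        genFrink_isFrink (Set.insert_nonempty z M)
      have : ¬ ∀ w ∈ F, w ∉ genFrink (insert z M) := fun h => hJ ⟨hgen, h⟩
      push_neg at this
      obtain ⟨f, hfF, A', hA'ne, hA'sub, hub⟩ := this
      refine ⟨f, hfF, A'.erase z, ?_, ?_⟩
      · intro w hw
        simp only [Finset.coe_erase, Set.mem_diff, Set.mem_singleton_iff] at hw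
        rcases hA'sub hw.1 with h | h
        · exact absurd h hw.2
        · exact h
      · intro u hu
        apply hub
        simp only [Set.mem_iInter] at hu ⊢
        intro w hw
        by_cases hwz : w = z
        · exact hu w (by simp [hwz])
        · exact hu w (by simp [Finset.mem_erase, hwz, hw])
    obtain ⟨f₁, hf₁F, A₁, hA₁, hub₁⟩ := key x hx
    obtain ⟨f₂, hf₂F, A₂, hA₂, hub₂⟩ := key y hy
    have hfF : f₁ ⊓ f₂ ∈ F := hF.2.2 _ _ hf₁F hf₂F
    apply hFM _ hfF
    refine hMfrink.2 (insert (x ⊓ y) (A₁ ∪ A₂)) ⟨_, Finset.mem_insert_self _ _⟩ ?_ _ ?_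
    · intro w hw
      simp only [Finset.coe_insert, Set.mem_insert_iff, Finset.coe_union, Set.mem_union] at hw
      rcases hw with h | h | h
      · exact h ▸ hxy
      · exact hA₁ h
      · exact hA₂ h
    · intro u hu
      simp only [Set.mem_iInter] at hu
      have hxyu : x ⊓ y ≤ u := hu _ (Finset.mem_insert_self _ _)
      obtain ⟨c₁, c₂, hxc₁, hyc₂, huc⟩ := hd u x y hxyu
      have hc₁ : f₁ ≤ c₁ := by
        apply hub₁
        simp only [Set.mem_iInter]
        intro w hw
        rcases Finset.mem_insert.1 hw with h | h
        · exact h ▸ hxc₁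
        · exact le_trans (hu w (Finset.mem_insert_of_mem (Finset.mem_union_left _ h)))
            (huc ▸ inf_le_left)
      have hc₂ : f₂ ≤ c₂ := by
        apply hub₂
        simp only [Set.mem_iInter]
        intro w hw
        rcases Finset.mem_insert.1 hw with h | h
        · exact h ▸ hyc₂
        · exact le_trans (hu w (Finset.mem_insert_of_mem (Finset.mem_union_right _ h)))
            (huc ▸ inf_le_right)
      calc f₁ ⊓ f₂ ≤ c₁ ⊓ c₂ := inf_le_inf hc₁ hc₂
        _ = u := huc.symm
  refine ⟨Mᶜ, ⟨⟨?_, ?_, ?_⟩, by rwa [compl_compl]⟩, fun x hx => hFM x hx, fun x hx hxI => hx (hIM hxI)⟩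
  · obtain ⟨x, hx⟩ := hF.1
    exact ⟨x, hFM x hx⟩
  · intro p q hp hpq hq
    exact hp (hlower q hq p hpq)
  · exact fun p q hp hq => hmeet p q hp hq

/-- φ(a) ⊆ ⋃ᵢ φ(bᵢ) iff ⋂ᵢ ↑bᵢ ⊆ ↑a, for distributive meet semi-lattices with top. -/
theorem phi_subset_iUnion_iff {L : Type*} [SemilatticeInf L] [OrderTop L]
    (hd : IsDistribSL L) (a : L) (B : Finset L) (hB : B.Nonempty) :
    phiSet a ⊆ (⋃ b ∈ B, phiSet b) ↔ (⋂ b ∈ B, Set.Ici b) ⊆ Set.Ici a := by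
  constructor
  · intro h u hu
    by_contra hau
    have hBne : (↑B : Set L).Nonempty := ⟨hB.choose, by exact_mod_cast hB.choose_spec⟩
    have hFfil : IsSLFilter (Set.Ici a) :=
      ⟨⟨a, le_refl a⟩, fun p q hp hpq => le_trans hp hpq, fun p q hp hq => le_inf hp hq⟩
    have hdisj : ∀ x ∈ Set.Ici a, x ∉ genFrink (↑B : Set L) := by
      rintro x hx ⟨A, hAne, hAsub, hub⟩
      apply hau
      have hxu : x ≤ u := hub (by
        simp only [Set.mem_iInter]
        intro w hw
        exact Set.mem_iInter₂.1 hu w (hAsub hw))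
      exact le_trans hx hxu
    obtain ⟨G, hG, hFG, hGdisj⟩ := exists_optimal hd hFfil (genFrink_isFrink hBne) hdisj
    obtain ⟨b, hbB, hGopt, hbG⟩ :=
      Set.mem_iUnion₂.1 (h (show G ∈ _ from ⟨hG, hFG (le_refl a)⟩))
    exact hGdisj b hbG (subset_genFrink _ (by exact_mod_cast hbB))
  · intro h F hF
    rcases hF with ⟨hFopt, haF⟩
    by_contra hFn
    have hb : (↑B : Set L) ⊆ Fᶜ := by
      intro b hbB hbF
      exact hFn (Set.mem_iUnion₂.2 ⟨b, by exact_mod_cast hbB, ⟨hFopt, hbF⟩⟩)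
    exact (hFopt.2.2 B hB hb a h) haF
end

section
/- Let L be a bounded distributive meet semi-lattice (with greatest element ⊤ and least element ⊥). For every optimal filter x of L there exists a prime filter y of L with x ⊆ y. -/
/-- Every optimal filter of a bounded distributive meet semi-lattice is contained
in a prime filter. -/
theorem optimal_le_prime {L : Type*} [SemilatticeInf L] [OrderTop L] [OrderBot L]
    (hd : IsDistribSL L) (x : Set L) (hx : IsOptimalFilter x) :
    ∃ y : Set L, IsSLPrimeFilter y ∧ x ⊆ y := by
  classical
  obtain ⟨hxf, hcne, -⟩ := hx
  obtain ⟨hxne, hxup, hxinf⟩ := hxf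
  -- x does not contain ⊥
  have hbot : (⊥ : L) ∉ x := by
    intro hb
    obtain ⟨e, he⟩ := hcne
    exact he (hxup ⊥ e hb bot_le)
  -- Zorn's lemma on filters containing x and avoiding ⊥
  set S : Set (Set L) := {F | IsSLFilter F ∧ x ⊆ F ∧ (⊥ : L) ∉ F} with hS
  have hxS : x ∈ S := ⟨⟨hxne, hxup, hxinf⟩, Set.Subset.rfl, hbot⟩
  obtain ⟨M, hxM, hMS, hMmax⟩ := zorn_subset_nonempty S (fun c hcS hchain hcne' => by
    obtain ⟨F0, hF0⟩ := hcne'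
    refine ⟨⋃₀ c, ⟨⟨?_, ?_, ?_⟩, ?_, ?_⟩, fun s hs => Set.subset_sUnion_of_mem hs⟩
    · obtain ⟨a, ha⟩ := (hcS hF0).1.1
      exact ⟨a, F0, hF0, ha⟩
    · rintro a b ⟨F, hF, haF⟩ hab
      exact ⟨F, hF, (hcS hF).1.2.1 a b haF hab⟩
    · rintro a b ⟨F, hF, haF⟩ ⟨G, hG, hbG⟩
      rcases hchain.total hF hG with h | h
      · exact ⟨G, hG, (hcS hG).1.2.2 a b (h haF) hbG⟩
      · exact ⟨F, hF, (hcS hF).1.2.2 a b haF (h hbG)⟩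
    · exact (hcS hF0).2.1.trans (Set.subset_sUnion_of_mem hF0)
    · rintro ⟨F, hF, hbF⟩
      exact (hcS hF).2.2 hbF) x hxS
  obtain ⟨⟨hMne, hMup, hMinf⟩, hxM', hMbot⟩ := hMS
  -- key: for a ∉ M, the filter generated by M and a must contain ⊥
  have key : ∀ a : L, a ∉ M → ∃ f ∈ M, f ⊓ a ≤ ⊥ := by
    intro a haM
    by_contra hno
    push_neg at hno
    set G : Set L := {c | ∃ m ∈ M, m ⊓ a ≤ c} with hG
    obtain ⟨m0, hm0⟩ := hMne
    have hMG : M ⊆ G := fun m hm => ⟨m, hm, inf_le_left⟩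
    have hGS : G ∈ S := by
      refine ⟨⟨⟨a, m0, hm0, inf_le_right⟩, ?_, ?_⟩, hxM'.trans hMG, ?_⟩
      · rintro c d ⟨m, hm, hmc⟩ hcd
        exact ⟨m, hm, hmc.trans hcd⟩
      · rintro c d ⟨m, hm, hmc⟩ ⟨m', hm', hm'd⟩
        refine ⟨m ⊓ m', hMinf m m' hm hm', le_inf ?_ ?_⟩
        · exact le_trans (inf_le_inf_right a (inf_le_left)) hmc
        · exact le_trans (inf_le_inf_right a (inf_le_right)) hm'd
      · rintro ⟨m, hm, hmb⟩
        exact hno m hm hmb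
    have : G ⊆ M := hMmax hGS hMG
    exact haM (this ⟨m0, hm0, inf_le_right⟩)
  refine ⟨M, ⟨⟨hMne, hMup, hMinf⟩, ?_, ?_⟩, hxM'⟩
  · intro h
    exact hMbot (h ▸ Set.mem_univ ⊥)
  · intro F₁ F₂ hF₁ hF₂ hsub
    by_contra hcon
    push_neg at hcon
    obtain ⟨hn1, hn2⟩ := hcon
    obtain ⟨a₁, ha₁F, ha₁M⟩ := Set.not_subset.mp hn1
    obtain ⟨a₂, ha₂F, ha₂M⟩ := Set.not_subset.mp hn2
    obtain ⟨f₁, hf₁, hf₁a⟩ := key a₁ ha₁M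
    obtain ⟨f₂, hf₂, hf₂a⟩ := key a₂ ha₂M
    set f := f₁ ⊓ f₂ with hf
    have hfM : f ∈ M := hMinf f₁ f₂ hf₁ hf₂
    have hfa₁ : f ⊓ a₁ ≤ ⊥ := le_trans (inf_le_inf_right a₁ inf_le_left) hf₁a
    have hfa₂ : f ⊓ a₂ ≤ ⊥ := le_trans (inf_le_inf_right a₂ inf_le_right) hf₂a
    obtain ⟨u₁, v₁, hfu₁, ha₁v₁, hbot_eq⟩ := hd ⊥ f a₁ hfa₁
    have hfa₂v₁ : f ⊓ a₂ ≤ v₁ := le_trans hfa₂ (le_trans bot_le (hbot_eq ▸ inf_le_right))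
    obtain ⟨u, v, hfu, ha₂v, hv₁_eq⟩ := hd v₁ f a₂ hfa₂v₁
    -- v is above both a₁ and a₂, hence in F₁ ∩ F₂ ⊆ M
    have hva₁ : a₁ ≤ v := le_trans ha₁v₁ (hv₁_eq ▸ inf_le_right)
    have hvM : v ∈ M := hsub ⟨hF₁.2.1 a₁ v ha₁F hva₁, hF₂.2.1 a₂ v ha₂F ha₂v⟩
    have huM : u ∈ M := hMup f u hfM hfu
    have hv₁M : v₁ ∈ M := hv₁_eq ▸ hMinf u v huM hvM
    have hu₁M : u₁ ∈ M := hMup f u₁ hfM hfu₁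
    exact hMbot (hbot_eq ▸ hMinf u₁ v₁ hu₁M hv₁M)
end

section
/- Let L be a bounded distributive meet semi-lattice (with ⊤ and ⊥). Then L₊, the set of prime filters of L, is a dense subset of the topological space L_*. -/
/-- The dual space of a distributive meet semi-lattice: its points are the
optimal filters. -/
structure OptSpace (L : Type*) [SemilatticeInf L] where
  carrier : Set L
  optimal : IsOptimalFilter carrier

/-- φ(a) as a subset of the dual space. -/
def phiO {L : Type*} [SemilatticeInf L] (a : L) : Set (OptSpace L) :=
  {x | a ∈ x.carrier}

/-- The Priestley-like topology on the dual space, generated by the subbasis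
{φ(a) : a ∈ L} ∪ {φ(b)ᶜ : b ∈ L}. -/
instance OptSpace.instTopologicalSpace (L : Type*) [SemilatticeInf L] :
    TopologicalSpace (OptSpace L) :=
  TopologicalSpace.generateFrom
    ({U | ∃ a : L, U = phiO a} ∪ {U | ∃ b : L, U = (phiO b)ᶜ})

section Aux

variable {L : Type*} [SemilatticeInf L]

lemma slFilter_top_mem [OrderTop L] {F : Set L} (hF : IsSLFilter F) : (⊤ : L) ∈ F := by
  obtain ⟨c, hc⟩ := hF.1
  exact hF.2.1 c ⊤ hc le_top

lemma slFilter_finsetInf_mem [OrderTop L] {F : Set L} (hF : IsSLFilter F)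
    (s : Finset L) (h : ∀ a ∈ s, a ∈ F) : s.inf id ∈ F := by
  classical
  induction s using Finset.induction_on with
  | empty => simpa using slFilter_top_mem hF
  | @insert a s _ ih =>
    rw [Finset.inf_insert]
    exact hF.2.2 _ _ (h a (Finset.mem_insert_self a s))
      (ih fun b hb => h b (Finset.mem_insert_of_mem hb))

lemma slIdeal_finset_ub {I : Set L} (hI : IsSLIdeal I) (s : Finset L)
    (hs : s.Nonempty) (hsub : ↑s ⊆ I) : ∃ z ∈ I, ∀ a ∈ s, a ≤ z := by
  classical
  induction hs using Finset.Nonempty.cons_induction with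
  | singleton a =>
    refine ⟨a, hsub (by simp), ?_⟩
    simp
  | cons a s ha hs ih =>
    obtain ⟨z, hzI, hz⟩ := ih (fun b hb => hsub (by simp [hb]))
    have haI : a ∈ I := hsub (by simp)
    obtain ⟨w, hwI, haw, hzw⟩ := hI.2.2 a z haI hzI
    refine ⟨w, hwI, ?_⟩
    intro b hb
    rcases Finset.mem_cons.1 hb with rfl | hb
    · exact haw
    · exact (hz b hb).trans hzw

lemma frinkIdeal_of_slIdeal {I : Set L} (hI : IsSLIdeal I) : IsFrinkIdeal I := by
  refine ⟨hI.1, fun A hA hAs c hc => ?_⟩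
  obtain ⟨z, hzI, hz⟩ := slIdeal_finset_ub hI A hA hAs
  have hzmem : z ∈ ⋂ a ∈ A, Set.Ici a := by
    simp only [Set.mem_iInter, Set.mem_Ici]
    exact hz
  exact hI.2.1 z c hzI (hc hzmem)

lemma prime_of_compl_ideal {F : Set L} (hF : IsSLFilter F) (hI : IsSLIdeal Fᶜ) :
    IsSLPrimeFilter F := by
  obtain ⟨w, hw⟩ := hI.1
  refine ⟨hF, ?_, ?_⟩
  · intro h
    exact hw (h ▸ Set.mem_univ w)
  · intro F₁ F₂ h₁ h₂ hsub
    by_contra hcon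
    push_neg at hcon
    obtain ⟨⟨x₁, hx₁, hx₁'⟩, x₂, hx₂, hx₂'⟩ :
        (∃ x ∈ F₁, x ∉ F) ∧ ∃ x ∈ F₂, x ∉ F := by
      constructor
      · obtain ⟨x, hx, hx'⟩ := Set.not_subset.1 hcon.1; exact ⟨x, hx, hx'⟩
      · obtain ⟨x, hx, hx'⟩ := Set.not_subset.1 hcon.2; exact ⟨x, hx, hx'⟩
    obtain ⟨z, hzc, hz₁, hz₂⟩ := hI.2.2 x₁ x₂ hx₁' hx₂'
    exact hzc (hsub ⟨h₁.2.1 x₁ z hx₁ hz₁, h₂.2.1 x₂ z hx₂ hz₂⟩)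

/-- Prime filter separation: if `a ≰ u`, there is a filter containing `a`,
missing `u`, whose complement is an ideal. -/
lemma exists_prime_sep_s15 (hd : IsDistribSL L) {a u : L} (h : ¬ a ≤ u) :
    ∃ P : Set L, IsSLFilter P ∧ IsSLIdeal Pᶜ ∧ a ∈ P ∧ u ∉ P := by
  classical
  set S : Set (Set L) := {G | IsSLFilter G ∧ a ∈ G ∧ u ∉ G} with hS
  have hIci : Set.Ici a ∈ S := by
    refine ⟨⟨⟨a, le_refl a⟩, fun x y hx hxy => le_trans hx hxy,
      fun x y hx hy => le_inf hx hy⟩, le_refl a, h⟩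
  have hchain : ∀ c ⊆ S, IsChain (fun x1 x2 => x1 ⊆ x2) c → c.Nonempty →
      ∃ ub ∈ S, ∀ s ∈ c, s ⊆ ub := by
    intro c hcS hchain ⟨G₀, hG₀⟩
    refine ⟨⋃₀ c, ⟨⟨?_, ?_, ?_⟩, ?_, ?_⟩, fun s hs => Set.subset_sUnion_of_mem hs⟩
    · obtain ⟨x, hx⟩ := (hcS hG₀).1.1
      exact ⟨x, G₀, hG₀, hx⟩
    · rintro x y ⟨G, hG, hx⟩ hxy
      exact ⟨G, hG, (hcS hG).1.2.1 x y hx hxy⟩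
    · rintro x y ⟨G₁, hG₁, hx⟩ ⟨G₂, hG₂, hy⟩
      rcases hchain.total hG₁ hG₂ with hle | hle
      · exact ⟨G₂, hG₂, (hcS hG₂).1.2.2 x y (hle hx) hy⟩
      · exact ⟨G₁, hG₁, (hcS hG₁).1.2.2 x y hx (hle hy)⟩
    · exact ⟨G₀, hG₀, (hcS hG₀).2.1⟩
    · rintro ⟨G, hG, hu⟩
      exact (hcS hG).2.2 hu
  obtain ⟨P, haP, hPmax⟩ := zorn_subset_nonempty S hchain _ hIci
  obtain ⟨hPfil, haP', huP⟩ := hPmax.1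
  -- key: any x outside P satisfies p ⊓ x ≤ u for some p ∈ P
  have key : ∀ x ∉ P, ∃ p ∈ P, p ⊓ x ≤ u := by
    intro x hx
    set G : Set L := {y | ∃ p ∈ P, p ⊓ x ≤ y} with hG
    have hPG : P ⊆ G := fun p hp => ⟨p, hp, inf_le_left⟩
    have hGfil : IsSLFilter G := by
      refine ⟨⟨x, a, haP', inf_le_right⟩, ?_, ?_⟩
      · rintro y z ⟨p, hp, hpy⟩ hyz
        exact ⟨p, hp, hpy.trans hyz⟩
      · rintro y z ⟨p₁, hp₁, hpy⟩ ⟨p₂, hp₂, hpz⟩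
        refine ⟨p₁ ⊓ p₂, hPfil.2.2 _ _ hp₁ hp₂, le_inf ?_ ?_⟩
        · exact le_trans (inf_le_inf_right x inf_le_left) hpy
        · exact le_trans (inf_le_inf_right x inf_le_right) hpz
    by_cases huG : u ∈ G
    · obtain ⟨p, hp, hpu⟩ := huG
      exact ⟨p, hp, hpu⟩
    · exfalso
      have : G ⊆ P := hPmax.2 ⟨hGfil, hPG haP', huG⟩ hPG
      exact hx (this ⟨a, haP', inf_le_right⟩)
  refine ⟨P, hPfil, ⟨⟨u, huP⟩, ?_, ?_⟩, haP', huP⟩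
  · -- lower set
    intro x y hx hyx hyP
    exact hx (hPfil.2.1 y x hyP hyx)
  · -- directed
    intro x₁ x₂ hx₁ hx₂
    obtain ⟨p₁, hp₁, h₁⟩ := key x₁ hx₁
    obtain ⟨p₂, hp₂, h₂⟩ := key x₂ hx₂
    set p := p₁ ⊓ p₂ with hp
    have hpP : p ∈ P := hPfil.2.2 _ _ hp₁ hp₂
    have h₁' : p ⊓ x₁ ≤ u := le_trans (inf_le_inf_right x₁ inf_le_left) h₁
    have h₂' : p ⊓ x₂ ≤ u := le_trans (inf_le_inf_right x₂ inf_le_right) h₂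
    obtain ⟨c₁, d₁, hpc₁, hxd₁, hu₁⟩ := hd u p x₁ h₁'
    have h₂'' : p ⊓ x₂ ≤ d₁ := h₂'.trans (hu₁.le.trans inf_le_right)
    obtain ⟨c₂, d₂, hpc₂, hxd₂, hd₁⟩ := hd d₁ p x₂ h₂''
    have hx₁d₂ : x₁ ≤ d₂ := hxd₁.trans (hd₁.le.trans inf_le_right)
    have hd₂P : d₂ ∉ P := by
      intro hmem
      have hc₂P : c₂ ∈ P := hPfil.2.1 p c₂ hpP hpc₂
      have hd₁P : d₁ ∈ P := hd₁ ▸ hPfil.2.2 _ _ hc₂P hmem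
      have hc₁P : c₁ ∈ P := hPfil.2.1 p c₁ hpP hpc₁
      exact huP (hu₁ ▸ hPfil.2.2 _ _ hc₁P hd₁P)
    exact ⟨d₂, hd₂P, hx₁d₂, hxd₂⟩

end Aux

/-- The prime filters form a dense subset of the dual space L_*. -/
theorem primes_dense {L : Type*} [SemilatticeInf L] [OrderTop L] [OrderBot L]
    (hd : IsDistribSL L) :
    Dense {x : OptSpace L | IsSLPrimeFilter x.carrier} := by
  classical
  rw [(TopologicalSpace.isTopologicalBasis_of_subbasis
    (s := {U | ∃ a : L, U = phiO a} ∪ {U | ∃ b : L, U = (phiO b)ᶜ}) rfl).dense_iff]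
  rintro o ⟨T, ⟨hTfin, hTsub⟩, rfl⟩ ⟨x, hx⟩
  set F := x.carrier with hF
  -- witness functions for the two kinds of subbasic sets
  set fa : Set (OptSpace L) → L := fun t =>
    if h : ∃ a : L, t = phiO a then h.choose else ⊥ with hfa
  set fb : Set (OptSpace L) → L := fun t =>
    if h : ∃ b : L, t = (phiO b)ᶜ then h.choose else ⊥ with hfb
  set T1 : Set (Set (OptSpace L)) := {t ∈ T | ∃ a : L, t = phiO a} with hT1
  set T2 : Set (Set (OptSpace L)) := {t ∈ T | ∃ b : L, t = (phiO b)ᶜ} with hT2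
  have hfa_spec : ∀ t ∈ T1, t = phiO (fa t) := by
    rintro t ⟨_, h⟩
    simp only [hfa, dif_pos h]
    exact h.choose_spec
  have hfb_spec : ∀ t ∈ T2, t = (phiO (fb t))ᶜ := by
    rintro t ⟨_, h⟩
    simp only [hfb, dif_pos h]
    exact h.choose_spec
  -- the meet of all the "positive" generators
  have hA : (fa '' T1).Finite := ((hTfin.subset (Set.sep_subset _ _)).image fa)
  set a0 : L := hA.toFinset.inf id with ha0
  have ha0F : a0 ∈ F := by
    refine slFilter_finsetInf_mem x.optimal.1 _ ?_
    intro a ha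
    rw [Set.Finite.mem_toFinset] at ha
    obtain ⟨t, ht, rfl⟩ := ha
    have := hx t ht.1
    rwa [hfa_spec t ht] at this
  -- the "negative" generators together with ⊥, all outside F
  have hB : (insert ⊥ (fb '' T2) : Set L).Finite :=
    ((hTfin.subset (Set.sep_subset _ _)).image fb).insert ⊥
  have hBne : hB.toFinset.Nonempty := ⟨⊥, by simp⟩
  have hbotF : (⊥ : L) ∉ F := by
    intro hbot
    obtain ⟨w, hw⟩ := x.optimal.2.1
    exact hw (x.optimal.1.2.1 ⊥ w hbot bot_le)
  have hBsub : ↑hB.toFinset ⊆ Fᶜ := by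
    intro b hb
    simp only [Finset.coe_sort_coe, Set.Finite.coe_toFinset, Set.mem_insert_iff] at hb
    rcases hb with rfl | ⟨t, ht, rfl⟩
    · exact hbotF
    · have := hx t ht.1
      rw [hfb_spec t ht] at this
      exact this
  -- get u above all negative generators with a0 ≰ u
  have hnot : ¬ ((⋂ b ∈ hB.toFinset, Set.Ici b) ⊆ Set.Ici a0) := by
    intro hsub
    exact (x.optimal.2.2 hB.toFinset hBne hBsub a0 hsub) ha0F
  obtain ⟨u, hu, hau⟩ := Set.not_subset.1 hnot
  rw [Set.mem_Ici] at hau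
  obtain ⟨P, hPfil, hPidl, haP, huP⟩ := exists_prime_sep_s15 hd hau
  set y : OptSpace L := ⟨P, hPfil, frinkIdeal_of_slIdeal hPidl⟩ with hy
  refine ⟨y, ?_, prime_of_compl_ideal hPfil hPidl⟩
  rw [Set.mem_sInter]
  intro t ht
  rcases hTsub ht with h1 | h2
  · have ht1 : t ∈ T1 := ⟨ht, h1⟩
    rw [hfa_spec t ht1]
    have hmem : fa t ∈ hA.toFinset := by
      rw [Set.Finite.mem_toFinset]; exact ⟨t, ht1, rfl⟩
    exact hPfil.2.1 a0 (fa t) haP (Finset.inf_le hmem)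
  · have ht2 : t ∈ T2 := ⟨ht, h2⟩
    rw [hfb_spec t ht2]
    intro hmem
    have hbu : fb t ≤ u := by
      have : u ∈ ⋂ b ∈ hB.toFinset, Set.Ici b := hu
      simp only [Set.mem_iInter, Set.mem_Ici] at this
      exact this (fb t) (by rw [Set.Finite.mem_toFinset]; exact Set.mem_insert_of_mem _ ⟨t, ht2, rfl⟩)
    exact huP (hPfil.2.1 (fb t) u hmem hbu)
end

section
/- Let L be a bounded distributive meet semi-lattice (with ⊤ and ⊥). Then L_* is a Priestley space: the space L_* is compact, and for all optimal filters x, y of L with x ⊈ y there exists a clopen subset U of L_* that is an upper set with respect to inclusion such that x ∈ U and y ∉ U. -/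
section PriestleyAux
variable {L : Type*} [SemilatticeInf L]

lemma optAux_top [OrderTop L] (x : OptSpace L) : (⊤ : L) ∈ x.carrier := by
  obtain ⟨a, ha⟩ := x.optimal.1.1
  exact x.optimal.1.2.1 a ⊤ ha le_top

lemma optAux_bot [OrderBot L] (x : OptSpace L) : (⊥ : L) ∉ x.carrier := by
  intro h
  obtain ⟨b, hb⟩ := x.optimal.2.1
  exact hb (x.optimal.1.2.1 ⊥ b h bot_le)

lemma optAux_inf (x : OptSpace L) (a b : L) :
    a ⊓ b ∈ x.carrier ↔ a ∈ x.carrier ∧ b ∈ x.carrier := by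
  constructor
  · intro h
    exact ⟨x.optimal.1.2.1 _ _ h inf_le_left, x.optimal.1.2.1 _ _ h inf_le_right⟩
  · intro ⟨h1, h2⟩; exact x.optimal.1.2.2 a b h1 h2

theorem optSpace_compact [OrderTop L] [OrderBot L] :
    CompactSpace (OptSpace L) := by
  rw [← isCompact_univ_iff, isCompact_iff_ultrafilter_le_nhds]
  intro U _
  set G : Set L := {a | phiO a ∈ U} with hGdef
  have hGopt : IsOptimalFilter G := by
    refine ⟨⟨⟨⊤, ?_⟩, ?_, ?_⟩, ⟨⊥, ?_⟩, ?_⟩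
    · have : phiO (⊤ : L) = Set.univ := Set.eq_univ_of_forall fun x => optAux_top x
      show phiO (⊤:L) ∈ U
      rw [this]; exact Filter.univ_mem
    · intro a b ha hab
      exact Filter.mem_of_superset ha fun x hx => x.optimal.1.2.1 a b hx hab
    · intro a b ha hb
      have : phiO (a ⊓ b) = phiO a ∩ phiO b := by
        ext x; exact optAux_inf x a b
      show phiO (a ⊓ b) ∈ U
      rw [this]; exact Filter.inter_mem ha hb
    · have : phiO (⊥ : L) = ∅ := by
        ext x; simp [phiO, optAux_bot x]
      intro h
      have : (∅ : Set (OptSpace L)) ∈ U := by rw [← this]; exact h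
      exact Filter.empty_notMem (↑U : Filter (OptSpace L)) this
    · intro A hA hAsub c hc
      have h1 : ∀ a ∈ A, (phiO a)ᶜ ∈ U := fun a ha =>
        Ultrafilter.compl_mem_iff_notMem.mpr (hAsub ha)
      have h2 : (⋂ a ∈ A, (phiO a)ᶜ) ∈ U := Filter.biInter_finset_mem A |>.mpr h1
      have h3 : (⋂ a ∈ A, (phiO a)ᶜ) ⊆ (phiO c)ᶜ := by
        intro x hx hcx
        have hsub : (↑A : Set L) ⊆ x.carrierᶜ := by
          intro a ha
          exact Set.mem_iInter₂.mp hx a ha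
        exact x.optimal.2.2 A hA hsub c hc hcx
      exact Ultrafilter.compl_mem_iff_notMem.mp (Filter.mem_of_superset h2 h3)
  refine ⟨⟨G, hGopt⟩, trivial, ?_⟩
  rw [TopologicalSpace.nhds_generateFrom]
  refine le_iInf₂ fun s hs => Filter.le_principal_iff.mpr ?_
  obtain ⟨hxs, hsg⟩ := hs
  rcases hsg with ⟨a, rfl⟩ | ⟨b, rfl⟩
  · exact hxs
  · exact Ultrafilter.compl_mem_iff_notMem.mpr hxs

lemma phiO_clopen (a : L) : IsClopen (phiO a : Set (OptSpace L)) := by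
  constructor
  · rw [← isOpen_compl_iff]
    exact TopologicalSpace.isOpen_generateFrom_of_mem (Or.inr ⟨a, rfl⟩)
  · exact TopologicalSpace.isOpen_generateFrom_of_mem (Or.inl ⟨a, rfl⟩)

end PriestleyAux

/-- L_* is a Priestley space: it is compact and satisfies the Priestley
separation axiom with respect to inclusion of optimal filters. -/

theorem optSpace_is_priestley {L : Type*} [SemilatticeInf L] [OrderTop L]
    [OrderBot L] (hd : IsDistribSL L) :
    CompactSpace (OptSpace L) ∧
      ∀ x y : OptSpace L, ¬ x.carrier ⊆ y.carrier →
        ∃ U : Set (OptSpace L), IsClopen U ∧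
          (∀ u v : OptSpace L, u ∈ U → u.carrier ⊆ v.carrier → v ∈ U) ∧
          x ∈ U ∧ y ∉ U := by
  refine ⟨optSpace_compact, fun x y hxy => ?_⟩
  obtain ⟨a, hax, hay⟩ := Set.not_subset.mp hxy
  exact ⟨phiO a, phiO_clopen a, fun u v hu huv => huv hu, hax, hay⟩
end

section
/- Let L be a bounded implicative meet semi-lattice and let a, b ∈ L. For every optimal filter x of L: a → b ∈ x if and only if for every optimal filter y of L with x ⊆ y, a ∈ y implies b ∈ y. (Equivalently, φ(a → b) = φ(a) → φ(b), where φ(a) → φ(b) = {x optimal : ↑x ∩ φ(a) ⊆ φ(b)}.) -/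
/-!
If `a → b ∉ x`, then `b` lies outside the filter generated by `x ∪ {a}`, and a Zorn-maximal
filter `y` containing it and avoiding `b` refutes the right-hand side once `y` is shown to be
optimal. For that, each `e ∉ y` has some `g ∈ y` with `g ⊓ e ≤ b` (maximality), so for a finite
`A ⊆ yᶜ` a single `g ∈ y` works for all of `A`; then `g → b` is a common upper bound of `A`,
and any `c ∈ y` below all such bounds would give `g ⊓ c ≤ b`, putting `b` in `y`.
-/

section

variable {L : Type*} [SemilatticeInf L]

def filterInsert (F : Set L) (e : L) : Set L :=
  {c | ∃ d ∈ F, d ⊓ e ≤ c}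

lemma isSLFilter_filterInsert {F : Set L} (hF : IsSLFilter F) (e : L) :
    IsSLFilter (filterInsert F e) := by
  obtain ⟨⟨d₀, hd₀⟩, -, hinf⟩ := hF
  refine ⟨⟨e, d₀, hd₀, inf_le_right⟩, ?_, ?_⟩
  · rintro c c' ⟨d, hd, hdc⟩ hcc'
    exact ⟨d, hd, hdc.trans hcc'⟩
  · rintro c c' ⟨d, hd, hdc⟩ ⟨d', hd', hdc'⟩
    exact ⟨d ⊓ d', hinf _ _ hd hd',
      le_inf ((inf_le_inf_right e inf_le_left).trans hdc)
        ((inf_le_inf_right e inf_le_right).trans hdc')⟩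

lemma subset_filterInsert (F : Set L) (e : L) : F ⊆ filterInsert F e :=
  fun d hd => ⟨d, hd, inf_le_left⟩

lemma mem_filterInsert_self {F : Set L} (hF : IsSLFilter F) (e : L) :
    e ∈ filterInsert F e :=
  let ⟨d, hd⟩ := hF.1
  ⟨d, hd, inf_le_right⟩

lemma isSLFilter_sUnion_of_isChain {c : Set (Set L)} (hc : ∀ F ∈ c, IsSLFilter F)
    (hchain : IsChain (· ⊆ ·) c) (hne : c.Nonempty) : IsSLFilter (⋃₀ c) := by
  refine ⟨?_, ?_, ?_⟩
  · obtain ⟨F, hF⟩ := hne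
    obtain ⟨d, hd⟩ := (hc F hF).1
    exact ⟨d, F, hF, hd⟩
  · rintro p q ⟨F, hF, hp⟩ hpq
    exact ⟨F, hF, (hc F hF).2.1 _ _ hp hpq⟩
  · rintro p q ⟨F, hF, hp⟩ ⟨F', hF', hq⟩
    rcases hchain.total hF hF' with h | h
    · exact ⟨F', hF', (hc F' hF').2.2 _ _ (h hp) hq⟩
    · exact ⟨F, hF, (hc F hF).2.2 _ _ hp (h hq)⟩

lemma exists_maximal_filter_not_mem {F : Set L} {b : L} (hF : IsSLFilter F) (hb : b ∉ F) :
    ∃ G, F ⊆ G ∧ Maximal (fun G => IsSLFilter G ∧ b ∉ G) G := by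
  refine zorn_subset_nonempty {G | IsSLFilter G ∧ b ∉ G} ?_ F ⟨hF, hb⟩
  intro c hcS hchain hne
  refine ⟨⋃₀ c, ⟨isSLFilter_sUnion_of_isChain (fun G hG => (hcS hG).1) hchain hne, ?_⟩,
    fun G hG => Set.subset_sUnion_of_mem hG⟩
  rintro ⟨G, hG, hbG⟩
  exact (hcS hG).2 hbG

lemma exists_inf_le_of_maximal {G : Set L} {b e : L}
    (hG : Maximal (fun G => IsSLFilter G ∧ b ∉ G) G) (he : e ∉ G) : ∃ g ∈ G, g ⊓ e ≤ b := by
  by_contra hb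
  exact he (hG.2 ⟨isSLFilter_filterInsert hG.1.1 e, hb⟩ (subset_filterInsert G e)
    (mem_filterInsert_self hG.1.1 e))

lemma exists_inf_le_of_maximal_of_finset {G : Set L} {b : L}
    (hG : Maximal (fun G => IsSLFilter G ∧ b ∉ G) G) (A : Finset L) (hA : ↑A ⊆ Gᶜ) :
    ∃ g ∈ G, ∀ e ∈ A, g ⊓ e ≤ b := by
  classical
  induction A using Finset.induction_on with
  | empty =>
    obtain ⟨g, hg⟩ := hG.1.1.1
    exact ⟨g, hg, by simp⟩
  | insert e A _ ih =>
    rw [Finset.coe_insert, Set.insert_subset_iff] at hA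
    obtain ⟨g₁, hg₁, hg₁e⟩ := exists_inf_le_of_maximal hG hA.1
    obtain ⟨g₂, hg₂, hg₂A⟩ := ih hA.2
    refine ⟨g₁ ⊓ g₂, hG.1.1.2.2 _ _ hg₁ hg₂, ?_⟩
    rintro e' he'
    rcases Finset.mem_insert.1 he' with rfl | he'
    · exact (inf_le_inf_right _ inf_le_left).trans hg₁e
    · exact (inf_le_inf_right _ inf_le_right).trans (hg₂A e' he')

variable (himp : L → L → L) (adj : ∀ a b c : L, a ⊓ c ≤ b ↔ c ≤ himp a b)
include adj

lemma isOptimalFilter_of_maximal {G : Set L} {b : L}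
    (hG : Maximal (fun G => IsSLFilter G ∧ b ∉ G) G) : IsOptimalFilter G := by
  refine ⟨hG.1.1, ⟨b, hG.1.2⟩, fun A _ hA c hc hcG => hG.1.2 ?_⟩
  obtain ⟨g, hg, hgA⟩ := exists_inf_le_of_maximal_of_finset hG A hA
  have hub : himp g b ∈ ⋂ e ∈ A, Set.Ici e := by
    simp only [Set.mem_iInter, Set.mem_Ici]
    exact fun e he => (adj g b e).1 (hgA e he)
  exact hG.1.1.2.1 _ _ (hG.1.1.2.2 _ _ hg hcG) ((adj g b c).2 (hc hub))

lemma exists_optimalFilter_not_mem {F : Set L} {b : L} (hF : IsSLFilter F) (hb : b ∉ F) :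
    ∃ G, F ⊆ G ∧ IsOptimalFilter G ∧ b ∉ G := by
  obtain ⟨G, hFG, hG⟩ := exists_maximal_filter_not_mem hF hb
  exact ⟨G, hFG, isOptimalFilter_of_maximal himp adj hG, hG.1.2⟩

end

theorem himp_mem_optimal_iff_general {L : Type*} [SemilatticeInf L]
    (himp : L → L → L) (adj : ∀ a b c : L, a ⊓ c ≤ b ↔ c ≤ himp a b)
    (a b : L) (x : Set L) (hx : IsOptimalFilter x) :
    himp a b ∈ x ↔
      ∀ y : Set L, IsOptimalFilter y → x ⊆ y → a ∈ y → b ∈ y := by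
  constructor
  · intro hab y hy hxy hay
    exact hy.1.2.1 _ _ (hy.1.2.2 _ _ hay (hxy hab)) ((adj a b _).2 le_rfl)
  · intro H
    by_contra hab
    have hb : b ∉ filterInsert x a := by
      rintro ⟨d, hd, hdb⟩
      exact hab (hx.1.2.1 _ _ hd ((adj a b d).1 (by rwa [inf_comm])))
    obtain ⟨y, hxy, hy, hby⟩ :=
      exists_optimalFilter_not_mem himp adj (isSLFilter_filterInsert hx.1 a) hb
    exact hby (H y hy ((subset_filterInsert x a).trans hxy) (hxy (mem_filterInsert_self hx.1 a)))

/-- In a bounded implicative meet semi-lattice, a → b belongs to an optimal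
filter x iff every optimal filter above x containing a contains b. -/
theorem himp_mem_optimal_iff {L : Type*} [SemilatticeInf L] [OrderTop L] [OrderBot L]
    (himp : L → L → L) (adj : ∀ a b c : L, a ⊓ c ≤ b ↔ c ≤ himp a b)
    (a b : L) (x : Set L) (hx : IsOptimalFilter x) :
    himp a b ∈ x ↔
      ∀ y : Set L, IsOptimalFilter y → x ⊆ y → a ∈ y → b ∈ y :=
  himp_mem_optimal_iff_general himp adj a b x hx
end

section
/- Let L and K be bounded implicative meet semi-lattices and let h : L → K be an implicative meet semi-lattice homomorphism. For every optimal filter x of K and every prime filter y of L with h⁻¹(x) ⊆ y, there exists a prime filter z of K such that x ⊆ z and h⁻¹(z) = y. -/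
/-- For an implicative meet semi-lattice homomorphism h : L → K, an optimal
filter x of K, and a prime filter y of L with h⁻¹(x) ⊆ y, there is a prime
filter z of K with x ⊆ z and h⁻¹(z) = y. -/
theorem implicative_hom_prime_lift {L K : Type*}
    [SemilatticeInf L] [OrderTop L] [OrderBot L]
    [SemilatticeInf K] [OrderTop K] [OrderBot K]
    (impL : L → L → L) (adjL : ∀ a b c : L, a ⊓ c ≤ b ↔ c ≤ impL a b)
    (impK : K → K → K) (adjK : ∀ a b c : K, a ⊓ c ≤ b ↔ c ≤ impK a b)
    (h : L → K) (hmeet : ∀ a b : L, h (a ⊓ b) = h a ⊓ h b)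
    (himp : ∀ a b : L, h (impL a b) = impK (h a) (h b))
    (x : Set K) (hx : IsOptimalFilter x)
    (y : Set L) (hy : IsSLPrimeFilter y) (hsub : h ⁻¹' x ⊆ y) :
    ∃ z : Set K, IsSLPrimeFilter z ∧ x ⊆ z ∧ h ⁻¹' z = y := by
  obtain ⟨⟨hyne, hyup, hymeet⟩, hyproper, hyprime⟩ := hy
  obtain ⟨⟨hxne, hxup, hxmeet⟩, _⟩ := hx
  -- h is monotone
  have hmono : ∀ a b : L, a ≤ b → h a ≤ h b := by
    intro a b hab
    have : h (a ⊓ b) = h a ⊓ h b := hmeet a b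
    rw [inf_eq_left.mpr hab] at this
    rw [this]; exact inf_le_right
  -- The ideal I : lower closure of h '' yᶜ
  set I : Set K := {k | ∃ b, b ∉ y ∧ k ≤ h b} with hI
  have hIlow : ∀ k k' : K, k ∈ I → k' ≤ k → k' ∈ I := by
    rintro k k' ⟨b, hb, hk⟩ hk'
    exact ⟨b, hb, le_trans hk' hk⟩
  have hIdir : ∀ k₁ k₂ : K, k₁ ∈ I → k₂ ∈ I → ∃ k ∈ I, k₁ ≤ k ∧ k₂ ≤ k := by
    rintro k₁ k₂ ⟨b₁, hb₁, hk₁⟩ ⟨b₂, hb₂, hk₂⟩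
    -- yᶜ is directed since y is a prime filter
    have hfil : ∀ a : L, IsSLFilter (Set.Ici a) := by
      intro a
      exact ⟨⟨a, le_refl a⟩, fun p q hp hpq => le_trans hp hpq,
        fun p q hp hq => le_inf hp hq⟩
    have : ¬ (Set.Ici b₁ ∩ Set.Ici b₂ ⊆ y) := by
      intro hss
      rcases hyprime _ _ (hfil b₁) (hfil b₂) hss with h1 | h1
      · exact hb₁ (h1 (le_refl b₁))
      · exact hb₂ (h1 (le_refl b₂))
    rw [Set.not_subset] at this
    obtain ⟨c, ⟨hc1, hc2⟩, hc3⟩ := this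
    exact ⟨h c, ⟨c, hc3, le_refl _⟩, le_trans hk₁ (hmono _ _ hc1),
      le_trans hk₂ (hmono _ _ hc2)⟩
  have hIne : I.Nonempty := by
    have : ∃ b, b ∉ y := by
      by_contra hcon
      push_neg at hcon
      exact hyproper (Set.eq_univ_of_forall hcon)
    obtain ⟨b, hb⟩ := this
    exact ⟨h b, b, hb, le_refl _⟩
  -- The base filter F₀ generated by x ∪ h '' y
  set F₀ : Set K := {k | ∃ u ∈ x, ∃ a ∈ y, u ⊓ h a ≤ k} with hF₀
  obtain ⟨u₀, hu₀⟩ := hxne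
  obtain ⟨a₀, ha₀⟩ := hyne
  have hF₀fil : IsSLFilter F₀ := by
    refine ⟨⟨u₀ ⊓ h a₀, u₀, hu₀, a₀, ha₀, le_refl _⟩, ?_, ?_⟩
    · rintro k k' ⟨u, hu, a, ha, hle⟩ hkk'
      exact ⟨u, hu, a, ha, le_trans hle hkk'⟩
    · rintro k k' ⟨u, hu, a, ha, hle⟩ ⟨u', hu', a', ha', hle'⟩
      refine ⟨u ⊓ u', hxmeet _ _ hu hu', a ⊓ a', hymeet _ _ ha ha', ?_⟩
      rw [hmeet]
      calc u ⊓ u' ⊓ (h a ⊓ h a') = (u ⊓ h a) ⊓ (u' ⊓ h a') := by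
            rw [inf_assoc, inf_left_comm u' (h a) (h a'), ← inf_assoc]
        _ ≤ k ⊓ k' := inf_le_inf hle hle'
  have hxF₀ : x ⊆ F₀ := fun u hu => ⟨u, hu, a₀, ha₀, inf_le_left⟩
  have hhyF₀ : ∀ a ∈ y, h a ∈ F₀ := fun a ha => ⟨u₀, hu₀, a, ha, inf_le_right⟩
  -- F₀ is disjoint from I
  have hdisj : ∀ k ∈ F₀, k ∉ I := by
    rintro k ⟨u, hu, a, ha, hle⟩ ⟨b, hb, hkb⟩
    have h1 : h a ⊓ u ≤ h b := by
      rw [inf_comm]; exact le_trans hle hkb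
    have h2 : u ≤ impK (h a) (h b) := (adjK _ _ _).mp h1
    have h3 : impL a b ∈ h ⁻¹' x := by
      have : h (impL a b) ∈ x := hxup _ _ hu (by rw [himp]; exact h2)
      exact this
    have h4 : impL a b ∈ y := hsub h3
    have h5 : a ⊓ impL a b ≤ b := (adjL a b (impL a b)).mpr (le_refl _)
    exact hb (hyup _ _ (hymeet _ _ ha h4) h5)
  -- Zorn's lemma on filters containing F₀ and disjoint from I
  set S : Set (Set K) := {z | IsSLFilter z ∧ F₀ ⊆ z ∧ ∀ k ∈ z, k ∉ I} with hS
  have hzorn : ∃ m, F₀ ⊆ m ∧ Maximal (· ∈ S) m := by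
    apply zorn_subset_nonempty
    · intro c hcS hchain hcne
      obtain ⟨z₀, hz₀⟩ := hcne
      refine ⟨⋃₀ c, ⟨⟨?_, ?_, ?_⟩, ?_, ?_⟩, fun s hs => Set.subset_sUnion_of_mem hs⟩
      · obtain ⟨k, hk⟩ := (hcS hz₀).1.1
        exact ⟨k, z₀, hz₀, hk⟩
      · rintro a b ⟨z, hz, haz⟩ hab
        exact ⟨z, hz, (hcS hz).1.2.1 _ _ haz hab⟩
      · rintro a b ⟨z1, hz1, ha⟩ ⟨z2, hz2, hb⟩
        rcases hchain.total hz1 hz2 with hle | hle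
        · exact ⟨z2, hz2, (hcS hz2).1.2.2 _ _ (hle ha) hb⟩
        · exact ⟨z1, hz1, (hcS hz1).1.2.2 _ _ ha (hle hb)⟩
      · exact fun k hk => Set.subset_sUnion_of_mem hz₀ ((hcS hz₀).2.1 hk)
      · rintro k ⟨z, hz, hk⟩
        exact (hcS hz).2.2 k hk
    · exact ⟨hF₀fil, subset_refl _, hdisj⟩
  obtain ⟨z, hF₀z, ⟨⟨hzfil, _, hzI⟩, hzmax⟩⟩ := hzorn
  -- maximality consequence: adjoining a ∉ z to z meets I
  have hmaxI : ∀ a : K, a ∉ z → ∃ w ∈ z, w ⊓ a ∈ I := by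
    intro a ha
    by_contra hcon
    push_neg at hcon
    set z' : Set K := {k | ∃ w ∈ z, w ⊓ a ≤ k} with hz'
    have hz'S : z' ∈ S := by
      refine ⟨⟨?_, ?_, ?_⟩, ?_, ?_⟩
      · obtain ⟨w, hw⟩ := hzfil.1
        exact ⟨w ⊓ a, w, hw, le_refl _⟩
      · rintro p q ⟨w, hw, hle⟩ hpq
        exact ⟨w, hw, le_trans hle hpq⟩
      · rintro p q ⟨w, hw, hle⟩ ⟨w', hw', hle'⟩
        refine ⟨w ⊓ w', hzfil.2.2 _ _ hw hw', ?_⟩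
        calc w ⊓ w' ⊓ a ≤ (w ⊓ a) ⊓ (w' ⊓ a) := by
              simp only [le_inf_iff]
              exact ⟨⟨le_trans inf_le_left inf_le_left, inf_le_right⟩,
                ⟨le_trans inf_le_left inf_le_right, inf_le_right⟩⟩
          _ ≤ p ⊓ q := inf_le_inf hle hle'
      · intro k hk
        exact ⟨k, hF₀z hk, inf_le_left⟩
      · rintro k ⟨w, hw, hle⟩ hkI
        exact hcon w hw (hIlow _ _ hkI hle)
    have hzz' : z ⊆ z' := by
      intro w hw
      exact ⟨w, hw, inf_le_left⟩
    have : z' ⊆ z := hzmax hz'S hzz'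
    apply ha
    apply this
    obtain ⟨w, hw⟩ := hzfil.1
    exact ⟨w, hw, inf_le_right⟩
  -- z is a prime filter
  have hzproper : z ≠ Set.univ := by
    intro hcon
    obtain ⟨k, hk⟩ := hIne
    exact hzI k (hcon ▸ Set.mem_univ k) hk
  have hzprime : IsSLPrimeFilter z := by
    refine ⟨hzfil, hzproper, ?_⟩
    intro F₁ F₂ hF₁ hF₂ hss
    by_contra hcon
    push_neg at hcon
    obtain ⟨a, ha₁, haz⟩ := Set.not_subset.mp hcon.1
    obtain ⟨b, hb₁, hbz⟩ := Set.not_subset.mp hcon.2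
    obtain ⟨w₁, hw₁, hw₁I⟩ := hmaxI a haz
    obtain ⟨w₂, hw₂, hw₂I⟩ := hmaxI b hbz
    obtain ⟨i, hiI, hi₁, hi₂⟩ := hIdir _ _ hw₁I hw₂I
    set w := w₁ ⊓ w₂ with hw
    have hwz : w ∈ z := hzfil.2.2 _ _ hw₁ hw₂
    have hwa : w ⊓ a ≤ i := le_trans (inf_le_inf_right a inf_le_left) hi₁
    have hwb : w ⊓ b ≤ i := le_trans (inf_le_inf_right b inf_le_right) hi₂
    set c := impK w i with hc
    have hac : a ≤ c := (adjK _ _ _).mp hwa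
    have hbc : b ≤ c := (adjK _ _ _).mp hwb
    have hcF : c ∈ F₁ ∩ F₂ :=
      ⟨hF₁.2.1 _ _ ha₁ hac, hF₂.2.1 _ _ hb₁ hbc⟩
    have hcz : c ∈ z := hss hcF
    have hwcz : w ⊓ c ∈ z := hzfil.2.2 _ _ hwz hcz
    have : w ⊓ c ≤ i := (adjK w i c).mpr (le_refl c)
    exact hzI _ (hzfil.2.1 _ _ hwcz this) hiI
  refine ⟨z, hzprime, fun u hu => hF₀z (hxF₀ hu), ?_⟩
  apply Set.eq_of_subset_of_subset
  · intro a ha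
    by_contra hay
    exact hzI _ ha ⟨a, hay, le_refl _⟩
  · intro a ha
    exact hF₀z (hhyF₀ a ha)
end
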